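/- arXiv:2109.02948 — 11 statements merged into one kernel-verified Lean document; each statement's English description precedes it below -/
import Mathlib

section
/- If L is a compartmental matrix, then any eigenvalue of L with zero real part is equal to zero. -/
/-!
Apply Gershgorin's theorem to the columns of `L`, i.e. to `Lᵀ`, which has the same
eigenvalues. For a compartmental matrix the `k`-th column disc is centred at `L k k ≤ 0` with
radius at most `-L k k`, so it lies in the closed left half-plane and touches the imaginary
axis only at the origin.
-/

open Matrix

theorem Matrix.hasEigenvalue_toLin'_transpose_iff {R n : Type*} [CommRing R] [IsDomain R]
    [Fintype n] [DecidableEq n] (A : Matrix n n R) (μ : R) :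
    Module.End.HasEigenvalue (toLin' Aᵀ) μ ↔ Module.End.HasEigenvalue (toLin' A) μ := by
  simp only [Module.End.hasEigenvalue_iff_isRoot_charpoly, charpoly_toLin',
    charpoly_transpose]

theorem Matrix.hasEigenvalue_toLin'_of_mulVec_eq_smul {K n : Type*} [Field K] [Fintype n]
    [DecidableEq n] {A : Matrix n n K} {μ : K} {v : n → K} (hv : v ≠ 0)
    (hAv : A *ᵥ v = μ • v) : Module.End.HasEigenvalue (toLin' A) μ :=
  Module.End.hasEigenvalue_of_hasEigenvector
    ⟨Module.End.mem_eigenspace_iff.mpr (by rw [toLin'_apply, hAv]), hv⟩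

theorem eigenvalue_mem_ball_col {K n : Type*} [NormedField K] [Fintype n] [DecidableEq n]
    {A : Matrix n n K} {μ : K} (hμ : Module.End.HasEigenvalue (toLin' A) μ) :
    ∃ k, μ ∈ Metric.closedBall (A k k) (∑ i ∈ Finset.univ.erase k, ‖A i k‖) :=
  eigenvalue_mem_ball ((hasEigenvalue_toLin'_transpose_iff A μ).mpr hμ)

theorem Matrix.sum_erase_col_le_neg_diag {n : Type*} [Fintype n] [DecidableEq n]
    {L : Matrix n n ℝ} (hcol : ∀ j, ∑ i, L i j ≤ 0) (k : n) :
    ∑ i ∈ Finset.univ.erase k, L i k ≤ -L k k := by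
  have := Finset.add_sum_erase Finset.univ (fun i => L i k) (Finset.mem_univ k)
  linarith [hcol k]

theorem Complex.eq_zero_of_norm_sub_ofReal_le_neg {z : ℂ} {c : ℝ} (hz : ‖z - c‖ ≤ -c)
    (hre : z.re = 0) : z = 0 := by
  have h := sq_le_sq' (by linarith [norm_nonneg (z - c)]) hz
  rw [Complex.sq_norm, Complex.normSq_apply] at h
  simp only [Complex.sub_re, Complex.sub_im, Complex.ofReal_re, Complex.ofReal_im, hre] at h
  have him : z.im = 0 := by nlinarith
  exact Complex.ext hre him

/-- If L is a compartmental matrix, then any eigenvalue of L with zero real part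
is equal to zero. -/
theorem compartmental_eigenvalue_re_zero_eq_zero {d : ℕ} (L : Matrix (Fin d) (Fin d) ℝ)
    (hoff : ∀ i j, i ≠ j → 0 ≤ L i j)
    (hcol : ∀ j, ∑ i, L i j ≤ 0)
    (μ : ℂ) (v : Fin d → ℂ) (hv : v ≠ 0)
    (hev : (L.map (fun a => (a : ℂ))) *ᵥ v = μ • v)
    (hre : μ.re = 0) :
    μ = 0 := by
  obtain ⟨k, hk⟩ := eigenvalue_mem_ball_col (hasEigenvalue_toLin'_of_mulVec_eq_smul hv hev)
  have hradius : ∑ i ∈ Finset.univ.erase k, ‖(L i k : ℂ)‖ = ∑ i ∈ Finset.univ.erase k, L i k :=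
    Finset.sum_congr rfl fun i hi => by
      rw [Complex.norm_real, Real.norm_of_nonneg (hoff i k (Finset.ne_of_mem_erase hi))]
  simp only [mem_closedBall_iff_norm, map_apply] at hk
  rw [hradius] at hk
  exact Complex.eq_zero_of_norm_sub_ofReal_le_neg (hk.trans (sum_erase_col_le_neg_diag hcol k)) hre
end

section
/- If L is a compartmental matrix, then ℝ^d is the direct sum of the kernel and the image of L; equivalently, the eigenvalue 0 of L is semisimple. -/
open Matrix

lemma l1_contract {d : ℕ} (B : Matrix (Fin d) (Fin d) ℝ)
    (h0 : ∀ i j, 0 ≤ B i j) (h1 : ∀ j, ∑ i, B i j ≤ 1) (v : Fin d → ℝ) :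
    ∑ i, |(B *ᵥ v) i| ≤ ∑ i, |v i| := by
  calc ∑ i, |(B *ᵥ v) i| ≤ ∑ i, ∑ j, B i j * |v j| := by
        refine Finset.sum_le_sum fun i _ => ?_
        calc |(B *ᵥ v) i| = |∑ j, B i j * v j| := rfl
          _ ≤ ∑ j, |B i j * v j| := Finset.abs_sum_le_sum_abs _ _
          _ = ∑ j, B i j * |v j| := by
              refine Finset.sum_congr rfl fun j _ => ?_
              rw [abs_mul, abs_of_nonneg (h0 i j)]
    _ = ∑ j, (∑ i, B i j) * |v j| := by
        rw [Finset.sum_comm]; simp [Finset.sum_mul]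
    _ ≤ ∑ j, |v j| := by
        refine Finset.sum_le_sum fun j _ => ?_
        exact mul_le_of_le_one_left (abs_nonneg _) (h1 j)

lemma ker_sq {d : ℕ} (L : Matrix (Fin d) (Fin d) ℝ)
    (hoff : ∀ i j, i ≠ j → 0 ≤ L i j)
    (hcol : ∀ j, ∑ i, L i j ≤ 0) (x : Fin d → ℝ)
    (hx : L *ᵥ (L *ᵥ x) = 0) : L *ᵥ x = 0 := by
  set y := L *ᵥ x with hy
  set M : ℝ := ∑ j, |L j j| with hM
  have hM0 : 0 ≤ M := Finset.sum_nonneg fun j _ => abs_nonneg _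
  set t : ℝ := 1 / (1 + M) with ht
  have ht0 : 0 < t := by positivity
  have hdiag : ∀ j, -1 ≤ t * L j j := by
    intro j
    have h1 : |L j j| ≤ M := Finset.single_le_sum (f := fun j => |L j j|)
      (fun i _ => abs_nonneg _) (Finset.mem_univ j)
    have h2 : -|L j j| ≤ L j j := neg_abs_le _
    have h3 : t * (1 + M) = 1 := by
      have hne : (1:ℝ) + M ≠ 0 := by positivity
      rw [ht]; field_simp
    nlinarith
  set A : Matrix (Fin d) (Fin d) ℝ := 1 + t • L with hA
  have hAe : ∀ i j, A i j = (if i = j then 1 else 0) + t * L i j := by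
    intro i j
    simp [hA, Matrix.add_apply, Matrix.one_apply, Matrix.smul_apply]
  have hA0 : ∀ i j, 0 ≤ A i j := by
    intro i j
    rw [hAe]
    by_cases hij : i = j
    · subst hij
      have := hdiag i
      rw [if_pos rfl]
      linarith
    · simp only [if_neg hij]
      have := hoff i j hij
      nlinarith [ht0.le]
  have hA1 : ∀ j, ∑ i, A i j ≤ 1 := by
    intro j
    have hs : ∑ i, A i j = 1 + t * ∑ i, L i j := by
      simp only [hAe, Finset.sum_add_distrib, Finset.mul_sum]
      congr 1
      simp [Finset.sum_ite_eq']
    rw [hs]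
    nlinarith [hcol j, ht0.le]
  have hAmul : ∀ v : Fin d → ℝ, A *ᵥ v = v + t • (L *ᵥ v) := by
    intro v
    simp [hA, Matrix.add_mulVec, Matrix.one_mulVec, Matrix.smul_mulVec]
  have hLy : L *ᵥ y = 0 := hx
  -- induction: ‖x + n t y‖₁ ≤ ‖x‖₁
  have key : ∀ n : ℕ, ∑ i, |x i + (n : ℝ) * t * y i| ≤ ∑ i, |x i| := by
    intro n
    induction n with
    | zero => simp
    | succ n ih =>
      push_cast
      have step : A *ᵥ (fun i => x i + (n : ℝ) * t * y i)
          = fun i => x i + ((n : ℝ) + 1) * t * y i := by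
        rw [hAmul]
        have hL : L *ᵥ (fun i => x i + (n : ℝ) * t * y i) = y := by
          have : (fun i => x i + (n : ℝ) * t * y i)
              = x + ((n : ℝ) * t) • y := by
            funext i
            simp only [Pi.add_apply, Pi.smul_apply, smul_eq_mul]
          rw [this, Matrix.mulVec_add, Matrix.mulVec_smul, hLy, ← hy]
          simp
        rw [hL]
        funext i
        simp only [Pi.add_apply, Pi.smul_apply, smul_eq_mul]
        ring
      calc ∑ i, |x i + ((n : ℝ) + 1) * t * y i|
          = ∑ i, |(A *ᵥ (fun i => x i + (n : ℝ) * t * y i)) i| := by rw [step]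
        _ ≤ ∑ i, |x i + (n : ℝ) * t * y i| := l1_contract A hA0 hA1 _
        _ ≤ ∑ i, |x i| := ih
  -- conclude y = 0
  have hy0 : ∑ i, |y i| = 0 := by
    by_contra h
    have hpos : 0 < ∑ i, |y i| :=
      lt_of_le_of_ne (Finset.sum_nonneg fun i _ => abs_nonneg _) (Ne.symm h)
    obtain ⟨n, hn⟩ := exists_nat_gt ((2 * ∑ i, |x i|) / (t * ∑ i, |y i|))
    have hlow : (n : ℝ) * t * ∑ i, |y i| - ∑ i, |x i| ≤ ∑ i, |x i + (n : ℝ) * t * y i| := by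
      have h1 : ∑ i, |(n : ℝ) * t * y i| ≤ ∑ i, (|x i + (n : ℝ) * t * y i| + |x i|) := by
        refine Finset.sum_le_sum fun i _ => ?_
        calc |(n : ℝ) * t * y i| = |(x i + (n : ℝ) * t * y i) - x i| := by ring_nf
          _ ≤ |x i + (n : ℝ) * t * y i| + |x i| := abs_sub _ _
      have h2 : ∑ i, |(n : ℝ) * t * y i| = (n : ℝ) * t * ∑ i, |y i| := by
        rw [Finset.mul_sum]
        refine Finset.sum_congr rfl fun i _ => ?_
        rw [abs_mul, abs_of_nonneg (by positivity : (0:ℝ) ≤ (n:ℝ) * t)]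
      rw [Finset.sum_add_distrib] at h1
      linarith [h2 ▸ h1]
    have := key n
    have hbig : (n : ℝ) * t * ∑ i, |y i| ≤ 2 * ∑ i, |x i| := by linarith
    have htpos : 0 < t * ∑ i, |y i| := by positivity
    rw [div_lt_iff₀ htpos] at hn
    nlinarith
  funext i
  have : |y i| = 0 := by
    have := Finset.sum_eq_zero_iff_of_nonneg (fun i _ => abs_nonneg (y i)) |>.mp hy0 i
      (Finset.mem_univ i)
    exact this
  simpa [abs_eq_zero] using this

/-- If L is a compartmental matrix, then ℝ^d is the direct sum of the kernel and the
image of L; equivalently, the eigenvalue 0 is semisimple, i.e. ker(L) = ker(L²). -/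
theorem compartmental_ker_isCompl_range {d : ℕ} (L : Matrix (Fin d) (Fin d) ℝ)
    (hoff : ∀ i j, i ≠ j → 0 ≤ L i j)
    (hcol : ∀ j, ∑ i, L i j ≤ 0) :
    IsCompl (LinearMap.ker (Matrix.toLin' L)) (LinearMap.range (Matrix.toLin' L)) ∧
    LinearMap.ker (Matrix.toLin' L) = LinearMap.ker (Matrix.toLin' (L * L)) := by
  have hker : LinearMap.ker (Matrix.toLin' L) = LinearMap.ker (Matrix.toLin' (L * L)) := by
    ext x
    simp only [LinearMap.mem_ker, Matrix.toLin'_apply]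
    constructor
    · intro h
      rw [← Matrix.mulVec_mulVec, h, Matrix.mulVec_zero]
    · intro h
      exact ker_sq L hoff hcol x (by rwa [Matrix.mulVec_mulVec])
  have hdisj : Disjoint (LinearMap.ker (Matrix.toLin' L)) (LinearMap.range (Matrix.toLin' L)) := by
    rw [disjoint_iff]
    ext v
    simp only [Submodule.mem_inf, LinearMap.mem_ker, LinearMap.mem_range, Submodule.mem_bot]
    constructor
    · rintro ⟨hv, u, rfl⟩
      simp only [Matrix.toLin'_apply] at hv ⊢
      exact ker_sq L hoff hcol u hv
    · rintro rfl
      exact ⟨by simp, 0, by simp⟩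
  refine ⟨⟨hdisj, ?_⟩, hker⟩
  rw [codisjoint_iff]
  have h1 : Module.finrank ℝ
      ↥(LinearMap.ker (Matrix.toLin' L) ⊔ LinearMap.range (Matrix.toLin' L)) = d := by
    have hsum := Submodule.finrank_sup_add_finrank_inf_eq
      (LinearMap.ker (Matrix.toLin' L)) (LinearMap.range (Matrix.toLin' L))
    have hinf : LinearMap.ker (Matrix.toLin' L) ⊓ LinearMap.range (Matrix.toLin' L) = ⊥ :=
      disjoint_iff.mp hdisj
    rw [hinf, finrank_bot] at hsum
    have hrn := LinearMap.finrank_range_add_finrank_ker (Matrix.toLin' L)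
    simp only [Module.finrank_fintype_fun_eq_card, Fintype.card_fin] at hrn
    omega
  apply Submodule.eq_top_of_finrank_eq
  rw [h1]
  simp [Module.finrank_fintype_fun_eq_card]
end

section
/- For the Laplacian matrix A(κ) of a directed graph with positive edge labels, the dimension of the kernel of A(κ) equals the number of terminal strongly connected components of the graph; in particular, it is independent of the choice of the positive labels κ. -/
open Matrix

/-- The Laplacian matrix of a labelled digraph: `κ i j` is the label of the edge
`j → i` (and `0` if there is no such edge); the diagonal of `κ` is zero. -/
def Lap {d : ℕ} (κ : Fin d → Fin d → ℝ) : Matrix (Fin d) (Fin d) ℝ :=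
  fun i j => if i = j then -(∑ ℓ, κ ℓ j) else κ i j

/-- `E i j` means the digraph has an edge `j → i` (matching the Laplacian convention
`a_{ij} = κ_{ij}` for the edge `j → i`).  `reach E a b` : `b` is reachable from `a`
along directed edges. -/
def reach {d : ℕ} (E : Fin d → Fin d → Prop) (a b : Fin d) : Prop :=
  Relation.ReflTransGen (fun u v => E v u) a b

/-- Reachability in the underlying undirected graph. -/
def reachU {d : ℕ} (E : Fin d → Fin d → Prop) (a b : Fin d) : Prop :=
  Relation.ReflTransGen (fun u v => E v u ∨ E u v) a b

/-- κ is an admissible labelling for the edge set `E`: positive on edges, zero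
elsewhere. -/
def Admissible {d : ℕ} (E : Fin d → Fin d → Prop) (κ : Fin d → Fin d → ℝ) : Prop :=
  ∀ i j, (E i j → 0 < κ i j) ∧ (¬ E i j → κ i j = 0)

/-- `S` is a terminal strongly connected component of the digraph with edge set `E`. -/
def IsTermSCC {d : ℕ} (E : Fin d → Fin d → Prop) (S : Set (Fin d)) : Prop :=
  ∃ a, S = {b | reach E a b ∧ reach E b a} ∧ ∀ b, reach E a b → reach E b a

namespace LapAux

variable {d : ℕ} {E : Fin d → Fin d → Prop} {κ : Fin d → Fin d → ℝ}

/-- From every vertex one can reach a vertex whose SCC is terminal. -/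
lemma exists_term (E : Fin d → Fin d → Prop) (a : Fin d) :
    ∃ b, reach E a b ∧ ∀ c, reach E b c → reach E c b := by
  have key : ∀ n (a : Fin d), ({c | reach E a c}).ncard ≤ n →
      ∃ b, reach E a b ∧ ∀ c, reach E b c → reach E c b := by
    intro n
    induction n with
    | zero =>
      intro a h
      exfalso
      have ha : a ∈ {c | reach E a c} := Relation.ReflTransGen.refl
      have : 0 < ({c | reach E a c}).ncard :=
        (Set.ncard_pos (Set.toFinite _)).2 ⟨a, ha⟩
      omega
    | succ n ih =>
      intro a h
      by_cases hall : ∀ c, reach E a c → reach E c a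
      · exact ⟨a, Relation.ReflTransGen.refl, hall⟩
      · push_neg at hall
        obtain ⟨c, hac, hca⟩ := hall
        have hsub : {x | reach E c x} ⊆ {x | reach E a x} :=
          fun x hx => Relation.ReflTransGen.trans hac hx
        have hss : {x | reach E c x} ⊂ {x | reach E a x} := by
          refine ⟨hsub, fun hts => hca ?_⟩
          exact hts (show a ∈ {x | reach E a x} from Relation.ReflTransGen.refl)
        have hlt : ({x | reach E c x}).ncard < ({x | reach E a x}).ncard :=
          Set.ncard_lt_ncard hss (Set.toFinite _)
        obtain ⟨b, hcb, hb⟩ := ih c (by omega)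
        exact ⟨b, Relation.ReflTransGen.trans hac hcb, hb⟩
  exact key _ a le_rfl

lemma tscc_closed {S : Set (Fin d)} (hS : IsTermSCC E S) :
    ∀ j ∈ S, ∀ ℓ, E ℓ j → ℓ ∈ S := by
  obtain ⟨a, rfl, hterm⟩ := hS
  intro j hj ℓ hℓ
  have haℓ : reach E a ℓ := Relation.ReflTransGen.trans hj.1
    (Relation.ReflTransGen.single hℓ)
  exact ⟨haℓ, hterm _ haℓ⟩

lemma tscc_mem {S : Set (Fin d)} (hS : IsTermSCC E S) :
    ∃ a ∈ S, S = {b | reach E a b ∧ reach E b a} := by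
  obtain ⟨a, rfl, _⟩ := hS
  exact ⟨a, ⟨Relation.ReflTransGen.refl, Relation.ReflTransGen.refl⟩, rfl⟩

lemma tscc_eq {S₁ S₂ : Set (Fin d)} (h₁ : IsTermSCC E S₁) (h₂ : IsTermSCC E S₂)
    {b : Fin d} (hb₁ : b ∈ S₁) (hb₂ : b ∈ S₂) : S₁ = S₂ := by
  obtain ⟨a₁, rfl, t₁⟩ := h₁
  obtain ⟨a₂, rfl, t₂⟩ := h₂
  obtain ⟨h1b, hb1⟩ := hb₁
  obtain ⟨h2b, hb2⟩ := hb₂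
  ext c
  constructor
  · rintro ⟨h1c, hc1⟩
    exact ⟨(h2b.trans hb1).trans h1c, hc1.trans (h1b.trans hb2)⟩
  · rintro ⟨h2c, hc2⟩
    exact ⟨(h1b.trans hb2).trans h2c, hc2.trans (h2b.trans hb1)⟩

lemma kappa_nonneg (hκ : Admissible E κ) (i j : Fin d) : 0 ≤ κ i j := by
  by_cases h : E i j
  · exact le_of_lt ((hκ i j).1 h)
  · rw [(hκ i j).2 h]

/-- Kernel vector for `Lap κ` supported on a terminal SCC. -/
lemma exists_ker_vec (hκ : Admissible E κ) (hirr : ∀ i, ¬ E i i)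
    {S : Set (Fin d)} (hS : IsTermSCC E S) :
    ∃ x : Fin d → ℝ, x ≠ 0 ∧ Lap κ *ᵥ x = 0 ∧ ∀ i, i ∉ S → x i = 0 := by
  classical
  obtain ⟨a, haS, _⟩ := tscc_mem hS
  have hclosed := tscc_closed hS
  have hκ0 : ∀ j ∈ S, ∀ ℓ, ℓ ∉ S → κ ℓ j = 0 := fun j hj ℓ hℓ =>
    (hκ ℓ j).2 fun hE => hℓ (hclosed j hj ℓ hE)
  set F : Finset (Fin d) := Finset.univ.filter (· ∈ S) with hF
  have hmemF : ∀ i, i ∈ F ↔ i ∈ S := by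
    intro i; simp [hF]
  -- column sums inside S vanish
  have hcol : ∀ j ∈ S, ∑ i ∈ F, Lap κ i j = 0 := by
    intro j hj
    have hjF : j ∈ F := (hmemF j).2 hj
    rw [← Finset.add_sum_erase F _ hjF]
    have h1 : Lap κ j j = -(∑ ℓ, κ ℓ j) := by simp [Lap]
    have h2 : ∑ i ∈ F.erase j, Lap κ i j = ∑ i ∈ F.erase j, κ i j := by
      refine Finset.sum_congr rfl fun i hi => ?_
      have : i ≠ j := (Finset.mem_erase.1 hi).1
      simp [Lap, this]
    have h3 : ∑ ℓ, κ ℓ j = ∑ ℓ ∈ F, κ ℓ j := by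
      refine (Finset.sum_subset (Finset.subset_univ F) ?_).symm
      intro ℓ _ hℓ
      exact hκ0 j hj ℓ fun hmem => hℓ ((hmemF ℓ).2 hmem)
    have h4 : ∑ ℓ ∈ F, κ ℓ j = κ j j + ∑ ℓ ∈ F.erase j, κ ℓ j :=
      (Finset.add_sum_erase F _ hjF).symm
    have h5 : κ j j = 0 := (hκ j j).2 (hirr j)
    rw [h1, h2, h3, h4, h5]
    ring
  -- the subspace of vectors supported on S
  let V : Submodule ℝ (Fin d → ℝ) :=
    { carrier := {x | ∀ i, i ∉ S → x i = 0}
      add_mem' := fun hx hy i hi => by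
        simp only [Pi.add_apply]
        rw [hx i hi, hy i hi, add_zero]
      zero_mem' := fun i hi => rfl
      smul_mem' := fun c x hx i hi => by
        simp only [Pi.smul_apply]
        rw [hx i hi, smul_zero] }
  have hmemV : ∀ x : Fin d → ℝ, x ∈ V ↔ ∀ i, i ∉ S → x i = 0 := fun x => Iff.rfl
  have hmap : ∀ x ∈ V, (Lap κ).mulVecLin x ∈ V := by
    intro x hx i hi
    show ((Lap κ) *ᵥ x) i = 0
    simp only [Matrix.mulVec, dotProduct]
    refine Finset.sum_eq_zero fun j _ => ?_
    by_cases hjS : j ∈ S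
    · have hij : i ≠ j := fun h => hi (h ▸ hjS)
      have : Lap κ i j = κ i j := by simp [Lap, hij]
      rw [this, hκ0 j hjS i hi, zero_mul]
    · rw [hx j hjS, mul_zero]
  let f : V →ₗ[ℝ] V := ((Lap κ).mulVecLin).restrict hmap
  -- the sum-over-S functional vanishes on the image
  have hgsum : ∀ x : Fin d → ℝ, (∀ i, i ∉ S → x i = 0) →
      ∑ i ∈ F, ((Lap κ) *ᵥ x) i = 0 := by
    intro x hx
    simp only [Matrix.mulVec, dotProduct]
    rw [Finset.sum_comm]
    refine Finset.sum_eq_zero fun j _ => ?_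
    by_cases hjS : j ∈ S
    · rw [← Finset.sum_mul, hcol j hjS, zero_mul]
    · rw [hx j hjS]
      simp
  -- f is not injective
  have hninj : ¬ Function.Injective f := by
    intro hinj
    have hsurj : Function.Surjective f :=
      (LinearMap.injective_iff_surjective).1 hinj
    set χ : Fin d → ℝ := fun i => if i = a then 1 else 0 with hχ
    have hχV : χ ∈ V := by
      intro i hi
      have : i ≠ a := fun h => hi (h ▸ haS)
      simp [hχ, this]
    obtain ⟨y, hy⟩ := hsurj ⟨χ, hχV⟩
    have hy' : (Lap κ) *ᵥ (y : Fin d → ℝ) = χ := congrArg Subtype.val hy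
    have h0 : ∑ i ∈ F, ((Lap κ) *ᵥ (y : Fin d → ℝ)) i = 0 := hgsum _ y.2
    rw [hy'] at h0
    have h1 : ∑ i ∈ F, χ i = 1 := by
      rw [hχ]
      rw [Finset.sum_ite_eq' F a (fun _ => (1 : ℝ))]
      simp [(hmemF a).2 haS]
    rw [h1] at h0
    exact one_ne_zero h0
  have hker : LinearMap.ker f ≠ ⊥ := fun h => hninj (LinearMap.ker_eq_bot.1 h)
  obtain ⟨x, hxker, hxne⟩ := (Submodule.ne_bot_iff _).1 hker
  refine ⟨(x : Fin d → ℝ), ?_, ?_, x.2⟩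
  · intro h
    exact hxne (Subtype.ext h)
  · have := congrArg Subtype.val (LinearMap.mem_ker.1 hxker)
    simpa [f, LinearMap.restrict_apply] using this

/-- Harmonic form of the transposed Laplacian. -/
lemma lapT_apply (hκ : Admissible E κ) (hirr : ∀ i, ¬ E i i) (x : Fin d → ℝ) (j : Fin d) :
    ((Lap κ)ᵀ *ᵥ x) j = ∑ i, κ i j * (x i - x j) := by
  classical
  have hjj : κ j j = 0 := (hκ j j).2 (hirr j)
  have hL : ((Lap κ)ᵀ *ᵥ x) j = ∑ i, Lap κ i j * x i := by
    simp [Matrix.mulVec, dotProduct, Matrix.transpose_apply]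
  rw [hL]
  rw [← Finset.add_sum_erase Finset.univ (fun i => Lap κ i j * x i) (Finset.mem_univ j)]
  rw [← Finset.add_sum_erase Finset.univ (fun i => κ i j * (x i - x j)) (Finset.mem_univ j)]
  have h1 : Lap κ j j * x j = -(∑ ℓ, κ ℓ j) * x j := by simp [Lap]
  have h2 : ∑ i ∈ Finset.univ.erase j, Lap κ i j * x i
      = ∑ i ∈ Finset.univ.erase j, κ i j * x i := by
    refine Finset.sum_congr rfl fun i hi => ?_
    have : i ≠ j := (Finset.mem_erase.1 hi).1
    simp [Lap, this]
  have h3 : ∑ ℓ, κ ℓ j = ∑ ℓ ∈ Finset.univ.erase j, κ ℓ j := by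
    rw [← Finset.add_sum_erase Finset.univ (fun ℓ => κ ℓ j) (Finset.mem_univ j), hjj, zero_add]
  rw [h1, h2, h3, hjj]
  simp only [mul_sub, Finset.sum_sub_distrib, ← Finset.sum_mul]
  ring

lemma max_step (hκ : Admissible E κ) (hirr : ∀ i, ¬ E i i) {x : Fin d → ℝ}
    (hx : (Lap κ)ᵀ *ᵥ x = 0) {j : Fin d} (hmax : ∀ i, x i ≤ x j)
    {i : Fin d} (hij : E i j) : x i = x j := by
  have h0 : ∑ i, κ i j * (x i - x j) = 0 := by
    rw [← lapT_apply hκ hirr x j, hx, Pi.zero_apply]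
  have hterm : ∀ i ∈ Finset.univ, κ i j * (x i - x j) ≤ 0 := fun i _ =>
    mul_nonpos_iff.2 (Or.inl ⟨kappa_nonneg hκ i j, sub_nonpos.2 (hmax i)⟩)
  have hzero : ∀ i ∈ Finset.univ, κ i j * (x i - x j) = 0 := by
    intro i hi
    by_contra hne
    have hlt : κ i j * (x i - x j) < 0 := lt_of_le_of_ne (hterm i hi) hne
    have : ∑ k, κ k j * (x k - x j) < 0 :=
      Finset.sum_neg' hterm ⟨i, hi, hlt⟩
    linarith
  have := hzero i (Finset.mem_univ i)
  rcases mul_eq_zero.1 this with h | h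
  · exact absurd h (ne_of_gt ((hκ i j).1 hij))
  · linarith [sub_eq_zero.1 h]

lemma max_reach (hκ : Admissible E κ) (hirr : ∀ i, ¬ E i i) {x : Fin d → ℝ}
    (hx : (Lap κ)ᵀ *ᵥ x = 0) {j c : Fin d} (h : reach E j c)
    (hmax : ∀ i, x i ≤ x j) : x c = x j := by
  induction h with
  | refl => rfl
  | @tail b c hb hcb ih =>
    have hmaxb : ∀ i, x i ≤ x b := fun i => by rw [ih]; exact hmax i
    rw [← ih]
    exact max_step hκ hirr hx hmaxb hcb

lemma nonpos_of_vanish (hκ : Admissible E κ) (hirr : ∀ i, ¬ E i i) {x : Fin d → ℝ}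
    (hx : (Lap κ)ᵀ *ᵥ x = 0)
    (h0 : ∀ S, IsTermSCC E S → ∃ b ∈ S, x b = 0) : ∀ i, x i ≤ 0 := by
  intro i
  obtain ⟨j, -, hjmax⟩ := Finset.exists_max_image Finset.univ x ⟨i, Finset.mem_univ i⟩
  have hmax : ∀ k, x k ≤ x j := fun k => hjmax k (Finset.mem_univ k)
  obtain ⟨b, hjb, hterm⟩ := exists_term E j
  have hSCC : IsTermSCC E {c | reach E b c ∧ reach E c b} := ⟨b, rfl, hterm⟩
  obtain ⟨b', hb', hxb'⟩ := h0 _ hSCC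
  have hxb : x b' = x j := max_reach hκ hirr hx (hjb.trans hb'.1) hmax
  calc x i ≤ x j := hmax i
    _ = 0 := by rw [← hxb, hxb']

end LapAux

/-- The dimension of the kernel of the Laplacian A(κ) of a digraph with positive edge
labels equals the number of terminal strongly connected components; in particular it
is independent of the choice of the positive labels κ. -/
theorem finrank_ker_Lap_eq_card_termSCC {d : ℕ} (E : Fin d → Fin d → Prop)
    (hirr : ∀ i, ¬ E i i) (κ : Fin d → Fin d → ℝ) (hκ : Admissible E κ) :
    Module.finrank ℝ (LinearMap.ker (Matrix.toLin' (Lap κ))) =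
      Set.ncard {S : Set (Fin d) | IsTermSCC E S} := by
  classical
  haveI : Fintype ↥{S : Set (Fin d) | IsTermSCC E S} := Fintype.ofFinite _
  have hcard : Fintype.card ↥{S : Set (Fin d) | IsTermSCC E S}
      = Set.ncard {S : Set (Fin d) | IsTermSCC E S} := by
    rw [← Nat.card_coe_set_eq, Nat.card_eq_fintype_card]
  have htl : ∀ (M : Matrix (Fin d) (Fin d) ℝ), Matrix.toLin' M = M.mulVecLin := by
    intro M
    apply LinearMap.ext
    intro x
    rw [Matrix.toLin'_apply, Matrix.mulVecLin_apply]
  apply le_antisymm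
  · -- upper bound via the transpose
    have h1 : Module.finrank ℝ (LinearMap.ker (Matrix.toLin' (Lap κ))) =
        Module.finrank ℝ (LinearMap.ker (Matrix.toLin' (Lap κ)ᵀ)) := by
      have e1 := LinearMap.finrank_range_add_finrank_ker (Matrix.toLin' (Lap κ))
      have e2 := LinearMap.finrank_range_add_finrank_ker (Matrix.toLin' (Lap κ)ᵀ)
      have hr : Module.finrank ℝ ↥(LinearMap.range (Matrix.toLin' (Lap κ))) =
          Module.finrank ℝ ↥(LinearMap.range (Matrix.toLin' (Lap κ)ᵀ)) := by
        have hT := Matrix.rank_transpose (Lap κ)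
        unfold Matrix.rank at hT
        rw [htl, htl]
        exact hT.symm
      omega
    rw [h1]
    let rep : ↥{S : Set (Fin d) | IsTermSCC E S} → Fin d := fun S => S.2.choose
    have hrep : ∀ S : ↥{S : Set (Fin d) | IsTermSCC E S}, rep S ∈ S.1 := by
      intro S
      have hspec := S.2.choose_spec
      have : S.1 = {b | reach E S.2.choose b ∧ reach E b S.2.choose} := hspec.1
      rw [show (S.1 : Set (Fin d)) = _ from this]
      exact ⟨Relation.ReflTransGen.refl, Relation.ReflTransGen.refl⟩
    let Φ : (LinearMap.ker (Matrix.toLin' (Lap κ)ᵀ)) →ₗ[ℝ]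
        (↥{S : Set (Fin d) | IsTermSCC E S} → ℝ) :=
      { toFun := fun x S => (x : Fin d → ℝ) (rep S)
        map_add' := fun x y => rfl
        map_smul' := fun c x => rfl }
    have hΦ : Function.Injective Φ := by
      rw [injective_iff_map_eq_zero]
      intro x hx0
      have hxker : (Lap κ)ᵀ *ᵥ (x : Fin d → ℝ) = 0 := by
        have := x.2
        rw [LinearMap.mem_ker, Matrix.toLin'_apply] at this
        exact this
      have hvan : ∀ S, IsTermSCC E S → ∃ b ∈ S, (x : Fin d → ℝ) b = 0 := by
        intro S hS
        exact ⟨rep ⟨S, hS⟩, hrep ⟨S, hS⟩, congrFun hx0 ⟨S, hS⟩⟩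
      have hle := LapAux.nonpos_of_vanish hκ hirr hxker hvan
      have hxkerneg : (Lap κ)ᵀ *ᵥ (-(x : Fin d → ℝ)) = 0 := by
        rw [Matrix.mulVec_neg, hxker, neg_zero]
      have hvanneg : ∀ S, IsTermSCC E S → ∃ b ∈ S, (-(x : Fin d → ℝ)) b = 0 := by
        intro S hS
        obtain ⟨b, hb, hxb⟩ := hvan S hS
        exact ⟨b, hb, by rw [Pi.neg_apply, hxb, neg_zero]⟩
      have hge := LapAux.nonpos_of_vanish hκ hirr hxkerneg hvanneg
      have hval : (x : Fin d → ℝ) = 0 := by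
        funext i
        have h1 := hle i
        have h2 := hge i
        rw [Pi.neg_apply] at h2
        have : (0 : ℝ) ≤ (x : Fin d → ℝ) i := by linarith
        exact le_antisymm h1 this
      exact Subtype.ext hval
    calc Module.finrank ℝ (LinearMap.ker (Matrix.toLin' (Lap κ)ᵀ))
        ≤ Module.finrank ℝ (↥{S : Set (Fin d) | IsTermSCC E S} → ℝ) :=
          LinearMap.finrank_le_finrank_of_injective hΦ
      _ = Fintype.card ↥{S : Set (Fin d) | IsTermSCC E S} :=
          Module.finrank_fintype_fun_eq_card ℝ
      _ = Set.ncard {S : Set (Fin d) | IsTermSCC E S} := hcard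
  · -- lower bound: disjointly supported kernel vectors
    have hex : ∀ S : ↥{S : Set (Fin d) | IsTermSCC E S}, ∃ x : Fin d → ℝ,
        x ≠ 0 ∧ Lap κ *ᵥ x = 0 ∧ ∀ i, i ∉ S.1 → x i = 0 :=
      fun S => LapAux.exists_ker_vec hκ hirr S.2
    choose v hv0 hvker hvsupp using hex
    have hind : LinearIndependent ℝ v := by
      rw [linearIndependent_iff']
      intro s g hsum S hSs
      obtain ⟨j, hj⟩ : ∃ j, v S j ≠ 0 := by
        by_contra h
        push_neg at h
        exact hv0 S (funext h)
      have hjS : j ∈ S.1 := by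
        by_contra h
        exact hj (hvsupp S j h)
      have heval := congrFun hsum j
      rw [Finset.sum_apply] at heval
      have hsingle : ∀ S' ∈ s, S' ≠ S → (g S' • v S') j = 0 := by
        intro S' _ hne
        have hjS' : j ∉ S'.1 := by
          intro hmem
          exact hne (Subtype.ext (LapAux.tscc_eq S'.2 S.2 hmem hjS))
        simp [hvsupp S' j hjS']
      rw [Finset.sum_eq_single S hsingle (fun h => absurd hSs h)] at heval
      have hgv : g S * v S j = 0 := by
        simpa using heval
      rcases mul_eq_zero.1 hgv with h | h
      · exact h
      · exact absurd h hj
    let w : ↥{S : Set (Fin d) | IsTermSCC E S} →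
        (LinearMap.ker (Matrix.toLin' (Lap κ))) := fun S =>
      ⟨v S, by rw [LinearMap.mem_ker, Matrix.toLin'_apply]; exact hvker S⟩
    have hindw : LinearIndependent ℝ w := by
      apply LinearIndependent.of_comp (Submodule.subtype _)
      exact hind
    have hle := hindw.fintype_card_le_finrank
    rw [hcard] at hle
    exact hle
end

section
/- The kernel of the Laplacian matrix A(κ) of a directed graph (with positive edge labels) contains a vector with all entries strictly positive if and only if every connected component of the graph is strongly connected (i.e., the graph is weakly reversible). -/
open Matrix

/-!
For a kernel vector `w` of `A(κ)`, summing the rows of `A(κ) w = 0` over a vertex set `T` and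
using that the columns of `A(κ)` sum to zero shows that the flow `∑ κ i j * w j` along the edges
entering `T` equals the flow along the edges leaving `T`.

If `w > 0` and `T` is the set of vertices reachable from `a`, no edge leaves `T`, so no edge
enters it either: the graph is weakly reversible. Conversely, for the positive support `P` of any
kernel vector the flow into `P` is `≤ 0` and the flow out of `P` is `≥ 0`; being equal, both
vanish, so no edge leaves `P`, and in a weakly reversible graph `P` is a union of components. The
indicator of the component `T` of `a` is a left null vector of `A(κ)` restricted to `T`, which
gives a nonzero kernel vector supported on `T`. Its positive and negative supports cannot both
meet `T`, so up to sign it is nonnegative and positive at `a`; summing over `a` gives a positive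
kernel vector.
-/

section

variable {d : ℕ} {E : Fin d → Fin d → Prop} {κ : Fin d → Fin d → ℝ}

theorem Admissible.nonneg (hκ : Admissible E κ) (i j : Fin d) : 0 ≤ κ i j := by
  by_cases h : E i j
  · exact ((hκ i j).1 h).le
  · exact ((hκ i j).2 h).ge

theorem Lap_of_ne {i j : Fin d} (h : i ≠ j) : Lap κ i j = κ i j := if_neg h

theorem sum_Lap_col (hdiag : ∀ j, κ j j = 0) (j : Fin d) : ∑ i, Lap κ i j = 0 := by
  rw [← Finset.add_sum_erase _ _ (Finset.mem_univ j), show Lap κ j j = -∑ ℓ, κ ℓ j from if_pos rfl,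
    ← Finset.add_sum_erase _ _ (Finset.mem_univ j),
    Finset.sum_congr rfl fun i hi => Lap_of_ne (Finset.ne_of_mem_erase hi), hdiag]
  ring

theorem sum_Lap_col_of_mem (hdiag : ∀ j, κ j j = 0) {T : Finset (Fin d)} {j : Fin d} (hj : j ∈ T) :
    ∑ i ∈ T, Lap κ i j = -∑ i ∈ Tᶜ, κ i j := by
  rw [eq_neg_iff_add_eq_zero, ← sum_Lap_col hdiag j, ← Finset.sum_add_sum_compl T]
  congr 1
  exact (Finset.sum_congr rfl fun i hi =>
    Lap_of_ne (ne_of_mem_of_not_mem hj (Finset.mem_compl.1 hi)).symm).symm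

/-- The flow from `S` into `T` along the edges `j → i`, each carrying `κ i j * w j`. -/
def flux (κ : Fin d → Fin d → ℝ) (w : Fin d → ℝ) (S T : Finset (Fin d)) : ℝ :=
  ∑ j ∈ S, ∑ i ∈ T, κ i j * w j

theorem flux_compl_eq (hdiag : ∀ j, κ j j = 0) {w : Fin d → ℝ} (hw : Lap κ *ᵥ w = 0)
    (T : Finset (Fin d)) : flux κ w Tᶜ T = flux κ w T Tᶜ := by
  have hout (j) (hj : j ∈ Tᶜ) : ∑ i ∈ T, Lap κ i j = ∑ i ∈ T, κ i j :=
    Finset.sum_congr rfl fun i hi => Lap_of_ne (ne_of_mem_of_not_mem hi (Finset.mem_compl.1 hj))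
  have h0 : ∑ j, (∑ i ∈ T, Lap κ i j) * w j = 0 := by
    simp_rw [Finset.sum_mul, Finset.sum_comm (s := Finset.univ)]
    exact Finset.sum_eq_zero fun i _ => congrFun hw i
  have h1 : ∑ j, (∑ i ∈ T, Lap κ i j) * w j = -flux κ w T Tᶜ + flux κ w Tᶜ T := by
    rw [← Finset.sum_add_sum_compl T, flux, flux, ← Finset.sum_neg_distrib]
    congr 1 <;> refine Finset.sum_congr rfl fun j hj => ?_
    · rw [sum_Lap_col_of_mem hdiag hj, neg_mul, Finset.sum_mul]
    · rw [hout j hj, Finset.sum_mul]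
  linarith

theorem not_edge_of_flux_eq_zero (hκ : Admissible E κ) {w : Fin d → ℝ} {S T : Finset (Fin d)}
    (hw : ∀ j ∈ S, 0 < w j) (h : flux κ w S T = 0) {i j : Fin d} (hj : j ∈ S) (hi : i ∈ T) :
    ¬ E i j := fun he => by
  have hterm (j) (hj : j ∈ S) (i) (_ : i ∈ T) : 0 ≤ κ i j * w j :=
    mul_nonneg (hκ.nonneg i j) (hw j hj).le
  have hij := (Finset.sum_eq_zero_iff_of_nonneg (hterm j hj)).1
    ((Finset.sum_eq_zero_iff_of_nonneg fun j hj => Finset.sum_nonneg (hterm j hj)).1 h j hj) i hi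
  exact (mul_pos ((hκ i j).1 he) (hw j hj)).ne' hij

def IsForwardClosed (E : Fin d → Fin d → Prop) (T : Finset (Fin d)) : Prop :=
  ∀ ⦃i j⦄, E i j → j ∈ T → i ∈ T

theorem IsForwardClosed.mem_of_reach {T : Finset (Fin d)} (hT : IsForwardClosed E T) {a b : Fin d}
    (ha : a ∈ T) (h : reach E a b) : b ∈ T := by
  induction h with
  | refl => exact ha
  | tail _ he ih => exact hT he ih

theorem IsForwardClosed.flux_compl_eq_zero {T : Finset (Fin d)} (hT : IsForwardClosed E T)
    (hκ : Admissible E κ) (w : Fin d → ℝ) : flux κ w T Tᶜ = 0 :=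
  Finset.sum_eq_zero fun j hj => Finset.sum_eq_zero fun i hi => by
    rw [(hκ i j).2 fun he => Finset.mem_compl.1 hi (hT he hj), zero_mul]

theorem IsForwardClosed.mem_of_reachU (hdiag : ∀ j, κ j j = 0) (hκ : Admissible E κ)
    {T : Finset (Fin d)} (hT : IsForwardClosed E T) {v : Fin d → ℝ} (hv : ∀ i, 0 < v i)
    (hLv : Lap κ *ᵥ v = 0) {a b : Fin d} (ha : a ∈ T) (h : reachU E a b) : b ∈ T := by
  have hin : flux κ v Tᶜ T = 0 := (flux_compl_eq hdiag hLv T).trans (hT.flux_compl_eq_zero hκ v)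
  induction h with
  | refl => exact ha
  | tail _ he ih =>
    rcases he with he | he
    · exact hT he ih
    · by_contra hc
      exact not_edge_of_flux_eq_zero hκ (fun j _ => hv j) hin (Finset.mem_compl.2 hc) ih he

open Classical in
noncomputable def reachSet (E : Fin d → Fin d → Prop) (a : Fin d) : Finset (Fin d) :=
  Finset.univ.filter (reach E a)

theorem mem_reachSet {a b : Fin d} : b ∈ reachSet E a ↔ reach E a b := by
  simp [reachSet]

theorem isForwardClosed_reachSet (a : Fin d) : IsForwardClosed E (reachSet E a) :=
  fun _ _ he hj => mem_reachSet.2 ((mem_reachSet.1 hj).tail he)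

theorem isForwardClosed_filter_pos (hdiag : ∀ j, κ j j = 0) (hκ : Admissible E κ)
    {w : Fin d → ℝ} (hw : Lap κ *ᵥ w = 0) : IsForwardClosed E {j | 0 < w j} := by
  set P : Finset (Fin d) := {j | 0 < w j}
  have hin : flux κ w Pᶜ P ≤ 0 := Finset.sum_nonpos fun j hj => Finset.sum_nonpos fun i _ =>
    mul_nonpos_of_nonneg_of_nonpos (hκ.nonneg i j) (not_lt.1 (by simpa [P] using hj))
  have hout : 0 ≤ flux κ w P Pᶜ := Finset.sum_nonneg fun j hj => Finset.sum_nonneg fun i _ =>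
    mul_nonneg (hκ.nonneg i j) (Finset.mem_filter.1 hj).2.le
  intro i j he hj
  by_contra hi
  exact not_edge_of_flux_eq_zero hκ (fun j hj => (Finset.mem_filter.1 hj).2)
    (by linarith [flux_compl_eq hdiag hw P]) hj (Finset.mem_compl.2 hi) he

theorem IsForwardClosed.exists_ne_zero_mulVec_Lap_eq_zero (hdiag : ∀ j, κ j j = 0)
    (hκ : Admissible E κ) {T : Finset (Fin d)} (hT : IsForwardClosed E T) (hne : T.Nonempty) :
    ∃ w : Fin d → ℝ, w ≠ 0 ∧ (∀ i ∉ T, w i = 0) ∧ Lap κ *ᵥ w = 0 := by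
  have : Nonempty T := hne.to_subtype
  set M : Matrix T T ℝ := (Lap κ).submatrix (↑) (↑)
  have hone : (fun _ => 1) ᵥ* M = 0 := funext fun j => by
    simp only [vecMul, dotProduct, one_mul, M, submatrix_apply, Pi.zero_apply]
    rw [Finset.sum_coe_sort T (fun i => Lap κ i j), sum_Lap_col_of_mem hdiag j.2, neg_eq_zero]
    exact Finset.sum_eq_zero fun i hi => (hκ i j).2 fun he => Finset.mem_compl.1 hi (hT he j.2)
  obtain ⟨x, hx0, hx⟩ := exists_mulVec_eq_zero_iff.2 <| exists_vecMul_eq_zero_iff.1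
    ⟨_, fun h => one_ne_zero (congrFun h (Classical.arbitrary T)), hone⟩
  have hsum (f : Fin d → ℝ) :
      ∑ k, f k * (if h : k ∈ T then x ⟨k, h⟩ else 0) = ∑ k : T, f k * x k := by
    rw [← Finset.sum_subset (Finset.subset_univ T) fun k _ hk => by simp [hk],
      ← Finset.sum_coe_sort T]
    simp
  refine ⟨fun i => if h : i ∈ T then x ⟨i, h⟩ else 0,
    fun h => hx0 (funext fun k => by simpa using congrFun h k), fun i hi => dif_neg hi,
    funext fun i => ?_⟩
  change ∑ k, Lap κ i k * _ = 0
  rw [hsum]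
  by_cases hi : i ∈ T
  · exact congrFun hx ⟨i, hi⟩
  · refine Finset.sum_eq_zero fun k _ => ?_
    rw [Lap_of_ne (ne_of_mem_of_not_mem k.2 hi).symm, (hκ i k).2 fun he => hi (hT he k.2),
      zero_mul]

theorem reachU_symm_of_reach {a b : Fin d} (h : reach E a b) : reachU E b a := by
  induction h with
  | refl => exact .refl
  | tail _ he ih => exact ih.head (Or.inr he)

theorem pos_of_reach_of_pos (hdiag : ∀ j, κ j j = 0) (hκ : Admissible E κ)
    (hwr : ∀ a b, reachU E a b → reach E a b) {w : Fin d → ℝ} (hw : Lap κ *ᵥ w = 0)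
    {a i : Fin d} (hi : 0 < w i) (h : reach E a i) : 0 < w a := by
  simpa using (isForwardClosed_filter_pos hdiag hκ hw).mem_of_reach (by simpa using hi)
    (hwr i a (reachU_symm_of_reach h))

theorem exists_nonneg_mulVec_Lap_eq_zero_pos (hdiag : ∀ j, κ j j = 0) (hκ : Admissible E κ)
    (hwr : ∀ a b, reachU E a b → reach E a b) (a : Fin d) :
    ∃ w : Fin d → ℝ, (∀ i, 0 ≤ w i) ∧ 0 < w a ∧ Lap κ *ᵥ w = 0 := by
  obtain ⟨w, hw0, hsupp, hw⟩ := (isForwardClosed_reachSet a).exists_ne_zero_mulVec_Lap_eq_zero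
    hdiag hκ ⟨a, mem_reachSet.2 .refl⟩
  obtain ⟨i, hi⟩ := Function.ne_iff.1 hw0
  obtain ⟨u, hu, hLu, hui⟩ :
      ∃ u : Fin d → ℝ, (∀ i ∉ reachSet E a, u i = 0) ∧ Lap κ *ᵥ u = 0 ∧ 0 < u i := by
    rcases hi.lt_or_gt with h | h
    · exact ⟨-w, fun j hj => by simp [hsupp j hj], by rw [mulVec_neg, hw, neg_zero],
        neg_pos.2 h⟩
    · exact ⟨w, hsupp, hw, h⟩
  have hreach {j : Fin d} (hj : u j ≠ 0) : reach E a j :=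
    mem_reachSet.1 (by_contra fun h => hj (hu j h))
  have hua : 0 < u a := pos_of_reach_of_pos hdiag hκ hwr hLu hui (hreach hui.ne')
  refine ⟨u, fun j => not_lt.1 fun hj => ?_, hua, hLu⟩
  -- A negative entry would make `-u` positive at `a` as well.
  have := pos_of_reach_of_pos hdiag hκ hwr (w := -u) (by rw [mulVec_neg, hLu, neg_zero])
    (neg_pos.2 hj) (hreach hj.ne)
  linarith [neg_pos.1 this]

end

/-- The kernel of the Laplacian of a digraph (with positive edge labels) contains a
vector with all entries strictly positive if and only if the graph is weakly
reversible, i.e. every connected component is strongly connected. -/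
theorem ker_Lap_pos_iff_weaklyReversible {d : ℕ} (E : Fin d → Fin d → Prop)
    (hirr : ∀ i, ¬ E i i) (κ : Fin d → Fin d → ℝ) (hκ : Admissible E κ) :
    (∃ v : Fin d → ℝ, (∀ i, 0 < v i) ∧ Lap κ *ᵥ v = 0) ↔
      (∀ a b, reachU E a b → reach E a b) := by
  have hdiag : ∀ j, κ j j = 0 := fun j => (hκ j j).2 (hirr j)
  constructor
  · rintro ⟨v, hv, hLv⟩ a b hab
    exact mem_reachSet.1 ((isForwardClosed_reachSet a).mem_of_reachU hdiag hκ hv hLv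
      (mem_reachSet.2 .refl) hab)
  · intro hwr
    choose w hw0 hwa hLw using exists_nonneg_mulVec_Lap_eq_zero_pos hdiag hκ hwr
    refine ⟨∑ a, w a, fun i => ?_, by simp [mulVec_sum, hLw]⟩
    simpa using Finset.sum_pos' (fun a _ => hw0 a i) ⟨i, Finset.mem_univ i, hwa i⟩
end

section
/- If a directed graph with positive edge labels is not strongly connected but has a weakly connected underlying graph, then every vector in the kernel of its Laplacian A(κ) has support contained in the union of the terminal strongly connected components. -/
open Matrix

/-- Auxiliary: `a` lies in a terminal SCC. -/
def Term {d : ℕ} (E : Fin d → Fin d → Prop) (a : Fin d) : Prop :=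
  ∀ b, reach E a b → reach E b a

lemma exists_reach_terminal {d : ℕ} (E : Fin d → Fin d → Prop) (j : Fin d) :
    ∃ t, reach E j t ∧ Term E t := by
  classical
  suffices h : ∀ n (j : Fin d),
      (Finset.univ.filter (fun x => reach E j x)).card ≤ n → ∃ t, reach E j t ∧ Term E t from
    h _ j le_rfl
  intro n
  induction n with
  | zero =>
    intro j h
    exfalso
    have hj : j ∈ Finset.univ.filter (fun x => reach E j x) :=
      Finset.mem_filter.2 ⟨Finset.mem_univ j, Relation.ReflTransGen.refl⟩
    have := Finset.card_pos.2 ⟨j, hj⟩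
    omega
  | succ n ih =>
    intro j h
    by_cases hj : Term E j
    · exact ⟨j, Relation.ReflTransGen.refl, hj⟩
    · simp only [Term] at hj
      push_neg at hj
      obtain ⟨b, hjb, hbj⟩ := hj
      have hjmem : j ∈ Finset.univ.filter (fun x => reach E j x) :=
        Finset.mem_filter.2 ⟨Finset.mem_univ j, Relation.ReflTransGen.refl⟩
      have hsub : Finset.univ.filter (fun x => reach E b x) ⊆
          (Finset.univ.filter (fun x => reach E j x)).erase j := by
        intro x hx
        rw [Finset.mem_filter] at hx
        refine Finset.mem_erase.2 ⟨?_, Finset.mem_filter.2 ⟨Finset.mem_univ x, hjb.trans hx.2⟩⟩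
        rintro rfl
        exact hbj hx.2
      have hcard : (Finset.univ.filter (fun x => reach E b x)).card ≤ n := by
        have h1 := Finset.card_le_card hsub
        rw [Finset.card_erase_of_mem hjmem] at h1
        omega
      obtain ⟨t, hbt, ht⟩ := ih b hcard
      exact ⟨t, hjb.trans hbt, ht⟩

/-- If a digraph with positive edge labels is not strongly connected but is weakly
connected, then every vector in the kernel of its Laplacian has support contained in
the union of the terminal strongly connected components. -/
theorem support_ker_Lap_subset_terminal {d : ℕ} (E : Fin d → Fin d → Prop)
    (hirr : ∀ i, ¬ E i i) (κ : Fin d → Fin d → ℝ) (hκ : Admissible E κ)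
    (hnotstrong : ¬ ∀ a b, reach E a b)
    (hweak : ∀ a b, reachU E a b)
    (v : Fin d → ℝ) (hv : Lap κ *ᵥ v = 0) :
    ∀ i, v i ≠ 0 → ∀ b, reach E i b → reach E b i := by
  classical
  have hκnn : ∀ i j, 0 ≤ κ i j := by
    intro i j
    by_cases h : E i j
    · exact le_of_lt ((hκ i j).1 h)
    · exact le_of_eq ((hκ i j).2 h).symm
  have hPedge : ∀ j i, Term E j → E i j → Term E i := by
    intro j i hj hij b hib
    have hji : reach E j i := Relation.ReflTransGen.single hij
    exact (hj b (hji.trans hib)).trans hji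
  have hcross : ∀ i j, ¬ Term E i → Term E j → κ i j = 0 := by
    intro i j hi hj
    by_cases h : E i j
    · exact absurd (hPedge j i hj h) hi
    · exact (hκ i j).2 h
  set N : Finset (Fin d) := Finset.univ.filter (fun a => ¬ Term E a) with hN
  have hmemN : ∀ a, a ∈ N ↔ ¬ Term E a := by
    intro a; simp [hN]
  set σ : Fin d → ℝ := fun i => if 0 < v i then 1 else if v i < 0 then -1 else 0 with hσ
  have hσv : ∀ i, σ i * v i = |v i| := by
    intro i
    by_cases h1 : 0 < v i
    · simp [hσ, h1, abs_of_pos h1]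
    · by_cases h2 : v i < 0
      · simp [hσ, h1, h2, abs_of_neg h2]
      · have : v i = 0 := le_antisymm (not_lt.1 h1) (not_lt.1 h2)
        simp [hσ, this]
  have hσabs : ∀ i, |σ i| ≤ 1 := by
    intro i
    by_cases h1 : 0 < v i
    · simp [hσ, h1]
    · by_cases h2 : v i < 0 <;> simp [hσ, h1, h2]
  have hσle : ∀ i x, σ i * x ≤ |x| := by
    intro i x
    calc σ i * x ≤ |σ i * x| := le_abs_self _
    _ = |σ i| * |x| := abs_mul _ _
    _ ≤ 1 * |x| := mul_le_mul_of_nonneg_right (hσabs i) (abs_nonneg x)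
    _ = |x| := one_mul _
  have hσne : ∀ i, σ i ≠ 0 → v i ≠ 0 := by
    intro i h hv0
    apply h
    simp [hσ, hv0]
  have heq : ∀ i, ∑ j, Lap κ i j * v j = 0 := by
    intro i
    have := congrFun hv i
    simpa [Matrix.mulVec, dotProduct] using this
  -- the signed sum over the non-terminal block vanishes
  have hsum0 : ∑ j ∈ N, ∑ i ∈ N, σ i * (Lap κ i j * v j) = 0 := by
    have h1 : ∑ i ∈ N, σ i * ∑ j, Lap κ i j * v j = 0 := by
      apply Finset.sum_eq_zero
      intro i _
      rw [heq i, mul_zero]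
    have h2 : ∑ j ∈ N, (∑ i ∈ N, σ i * (Lap κ i j * v j)) =
        ∑ j, ∑ i ∈ N, σ i * (Lap κ i j * v j) := by
      apply Finset.sum_subset (Finset.subset_univ N)
      intro j _ hjN
      apply Finset.sum_eq_zero
      intro i hiN
      have hTj : Term E j := not_not.1 (fun hc => hjN ((hmemN j).2 hc))
      have hiT : ¬ Term E i := (hmemN i).1 hiN
      have hne : i ≠ j := fun h => hiT (h ▸ hTj)
      have hLz : Lap κ i j = κ i j := if_neg hne
      rw [hLz, hcross i j hiT hTj]
      ring
    have h3 : ∑ j, ∑ i ∈ N, σ i * (Lap κ i j * v j)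
        = ∑ i ∈ N, σ i * ∑ j, Lap κ i j * v j := by
      rw [Finset.sum_comm]
      exact Finset.sum_congr rfl (fun i _ => (Finset.mul_sum _ _ _).symm)
    rw [h2, h3, h1]
  have hdiagL : ∀ j : Fin d, Lap κ j j = -(∑ ℓ, κ ℓ j) := fun j => if_pos rfl
  -- each column contribution is nonpositive
  have hinner_le : ∀ j ∈ N, ∑ i ∈ N, σ i * (Lap κ i j * v j) ≤ 0 := by
    intro j hj
    rw [← Finset.add_sum_erase _ _ hj]
    have hterm1 : σ j * (Lap κ j j * v j) = -((∑ ℓ, κ ℓ j) * |v j|) := by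
      rw [hdiagL j, ← hσv j]; ring
    have hterm2 : ∑ i ∈ N.erase j, σ i * (Lap κ i j * v j)
        ≤ (∑ ℓ, κ ℓ j) * |v j| := by
      have hb : ∀ i ∈ N.erase j, σ i * (Lap κ i j * v j) ≤ κ i j * |v j| := by
        intro i hi
        have hne : i ≠ j := Finset.ne_of_mem_erase hi
        rw [show Lap κ i j = κ i j from if_neg hne]
        calc σ i * (κ i j * v j) = κ i j * (σ i * v j) := by ring
        _ ≤ κ i j * |v j| := mul_le_mul_of_nonneg_left (hσle i (v j)) (hκnn i j)
      calc ∑ i ∈ N.erase j, σ i * (Lap κ i j * v j)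
          ≤ ∑ i ∈ N.erase j, κ i j * |v j| := Finset.sum_le_sum hb
        _ = (∑ i ∈ N.erase j, κ i j) * |v j| := (Finset.sum_mul _ _ _).symm
        _ ≤ (∑ ℓ, κ ℓ j) * |v j| := by
            apply mul_le_mul_of_nonneg_right _ (abs_nonneg _)
            exact Finset.sum_le_sum_of_subset_of_nonneg (Finset.subset_univ _)
              (fun ℓ _ _ => hκnn ℓ j)
    linarith [hterm1, hterm2]
  have hinner0 : ∀ j ∈ N, ∑ i ∈ N, σ i * (Lap κ i j * v j) = 0 :=
    (Finset.sum_eq_zero_iff_of_nonpos hinner_le).1 hsum0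
  -- equality analysis for support columns
  have hkey : ∀ j, ¬ Term E j → v j ≠ 0 →
      ((∀ ℓ, ℓ ∉ N.erase j → κ ℓ j = 0) ∧ (∀ i ∈ N.erase j, 0 < κ i j → v i ≠ 0)) := by
    intro j hjT hvj
    have hjN : j ∈ N := (hmemN j).2 hjT
    have h0 := hinner0 j hjN
    rw [← Finset.add_sum_erase _ _ hjN] at h0
    have hapos : 0 < |v j| := abs_pos.2 hvj
    have hterm1 : σ j * (Lap κ j j * v j) = -((∑ ℓ, κ ℓ j) * |v j|) := by
      rw [hdiagL j, ← hσv j]; ring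
    have hsimp : ∑ i ∈ N.erase j, σ i * (Lap κ i j * v j)
        = ∑ i ∈ N.erase j, κ i j * (σ i * v j) := by
      apply Finset.sum_congr rfl
      intro i hi
      rw [show Lap κ i j = κ i j from if_neg (Finset.ne_of_mem_erase hi)]
      ring
    rw [hterm1, hsimp] at h0
    have hle1 : ∀ i ∈ N.erase j, κ i j * (σ i * v j) ≤ κ i j * |v j| :=
      fun i _ => mul_le_mul_of_nonneg_left (hσle i (v j)) (hκnn i j)
    have hle2 : ∑ i ∈ N.erase j, κ i j * |v j| ≤ (∑ ℓ, κ ℓ j) * |v j| := by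
      rw [← Finset.sum_mul]
      exact mul_le_mul_of_nonneg_right
        (Finset.sum_le_sum_of_subset_of_nonneg (Finset.subset_univ _) fun ℓ _ _ => hκnn ℓ j)
        (le_of_lt hapos)
    have hsum_le : ∑ i ∈ N.erase j, κ i j * (σ i * v j) ≤ ∑ i ∈ N.erase j, κ i j * |v j| :=
      Finset.sum_le_sum hle1
    have hsum_eq : ∑ i ∈ N.erase j, κ i j * (σ i * v j) = (∑ ℓ, κ ℓ j) * |v j| := by
      linarith
    have hBeq : ∑ i ∈ N.erase j, κ i j * |v j| = (∑ ℓ, κ ℓ j) * |v j| := by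
      linarith
    have hDeq : ∑ i ∈ N.erase j, κ i j = ∑ ℓ, κ ℓ j := by
      rw [← Finset.sum_mul] at hBeq
      exact mul_right_cancel₀ (ne_of_gt hapos) hBeq
    constructor
    · intro ℓ hℓ
      have hsd := Finset.sum_sdiff (f := fun ℓ => κ ℓ j) (Finset.subset_univ (N.erase j))
      have hz : ∑ ℓ ∈ Finset.univ \ N.erase j, κ ℓ j = 0 := by
        rw [hDeq] at hsd
        linarith
      have := (Finset.sum_eq_zero_iff_of_nonneg (fun ℓ _ => hκnn ℓ j)).1 hz
      exact this ℓ (Finset.mem_sdiff.2 ⟨Finset.mem_univ ℓ, hℓ⟩)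
    · intro i hi hpos
      have hzero : ∑ i ∈ N.erase j, (κ i j * |v j| - κ i j * (σ i * v j)) = 0 := by
        rw [Finset.sum_sub_distrib, hsum_eq, hBeq, sub_self]
      have hnn : ∀ i ∈ N.erase j, 0 ≤ κ i j * |v j| - κ i j * (σ i * v j) :=
        fun i hi => sub_nonneg.2 (hle1 i hi)
      have heach := (Finset.sum_eq_zero_iff_of_nonneg hnn).1 hzero i hi
      have hσvj : σ i * v j = |v j| := by
        have hmul : κ i j * (σ i * v j) = κ i j * |v j| := by linarith
        exact mul_left_cancel₀ (ne_of_gt hpos) hmul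
      have hσnz : σ i ≠ 0 := by
        intro h
        rw [h, zero_mul] at hσvj
        linarith
      exact hσne i hσnz
  -- the support within the non-terminal part is closed under out-edges
  have hstep : ∀ j, ¬ Term E j → v j ≠ 0 → ∀ ℓ, E ℓ j → ¬ Term E ℓ ∧ v ℓ ≠ 0 := by
    intro j hjT hvj ℓ hE
    obtain ⟨hzero, hsupp⟩ := hkey j hjT hvj
    have hκpos : 0 < κ ℓ j := (hκ ℓ j).1 hE
    have hmem : ℓ ∈ N.erase j := by
      by_contra hc
      rw [hzero ℓ hc] at hκpos
      exact lt_irrefl 0 hκpos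
    have hℓN : ℓ ∈ N := Finset.mem_of_mem_erase hmem
    exact ⟨(hmemN ℓ).1 hℓN, hsupp ℓ hmem hκpos⟩
  intro i hvi
  by_contra hni
  have hniT : ¬ Term E i := hni
  obtain ⟨t, hit, htT⟩ := exists_reach_terminal E i
  have hall : ∀ x, reach E i x → ¬ Term E x ∧ v x ≠ 0 := by
    intro x hx
    induction hx with
    | refl => exact ⟨hniT, hvi⟩
    | tail hab e ih => exact hstep _ ih.1 ih.2 _ e
  exact (hall t hit).1 htT
end

section
/- For each connected component G_i of a labelled directed graph G, the indicator row vector of the nodes of G_i lies in the left kernel of the Laplacian A(κ); if moreover each connected component of G has exactly one terminal strongly connected component, these indicator vectors span the left kernel of A(κ). -/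
open Matrix

/-!
A row vector `w` lies in the left kernel of `Lap κ` iff, at every node `j`, `w j` is the
`κ`-weighted average of `w` over the out-neighbours of `j`. Indicators of components are
constant along edges, hence such averages. Conversely, by the maximum principle a maximum
of `w` on a component propagates along directed paths, and so does a minimum. From the
nodes where they are attained one reaches terminal strongly connected components, which
coincide when the component has only one; there the maximum equals the minimum, so `w` is
constant on every component and therefore a combination of the indicators.
-/

theorem Relation.ReflTransGen.exists_terminal {α : Type*} [Finite α] (r : α → α → Prop)
    (x : α) :
    ∃ y, ReflTransGen r x y ∧ ∀ b, ReflTransGen r y b → ReflTransGen r b y := by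
  obtain ⟨y, hxy, hmin⟩ := Set.Finite.exists_minimalFor (fun z => {c | ReflTransGen r z c})
    {z | ReflTransGen r x z} (Set.toFinite _) ⟨x, .refl⟩
  refine ⟨y, hxy, fun b hyb => ?_⟩
  have hsub : {c | ReflTransGen r b c} ⊆ {c | ReflTransGen r y c} := fun c hbc => hyb.trans hbc
  exact hmin (hxy.trans hyb) hsub .refl

theorem Submodule.mem_span_indicator_setOf_of_equivalence {α R : Type*} [Finite α]
    [CommSemiring R] {r : α → α → Prop} (hr : Equivalence r) {w : α → R}
    (hw : ∀ a b, r a b → w a = w b) :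
    w ∈ span R {v | ∃ a, v = Set.indicator {b | r a b} fun _ => (1 : R)} := by
  classical
  let s : Setoid α := ⟨r, hr⟩
  have : Fintype (Quotient s) := Fintype.ofFinite _
  have hrep : w = ∑ q : Quotient s,
      q.lift w hw • Set.indicator {b | r q.out b} fun _ => (1 : R) := by
    funext b
    have hclass : ∀ q : Quotient s, r q.out b ↔ q = ⟦b⟧ := fun q => by
      conv_rhs => rw [← q.out_eq]
      exact (_root_.Quotient.eq (r := s)).symm
    simp [Finset.sum_apply, Set.indicator_apply, hclass]
  rw [hrep]
  exact sum_mem fun q _ => smul_mem _ _ (subset_span ⟨q.out, rfl⟩)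

theorem Matrix.mem_ker_toLin'_transpose_iff {m n R : Type*} [Fintype m] [DecidableEq m]
    [CommSemiring R] (A : Matrix m n R) (w : m → R) :
    w ∈ LinearMap.ker (toLin' Aᵀ) ↔ w ᵥ* A = 0 := by
  rw [LinearMap.mem_ker, toLin'_apply, mulVec_transpose]

section Digraph

variable {d : ℕ} {E : Fin d → Fin d → Prop} {κ : Fin d → Fin d → ℝ}

theorem reachU_of_reach {a b : Fin d} (h : reach E a b) : reachU E a b :=
  Relation.ReflTransGen.mono (fun _ _ => Or.inl) _ _ h

theorem reachU_equivalence : Equivalence (reachU E) where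
  refl _ := .refl
  symm h := by
    induction h with
    | refl => exact .refl
    | tail _ hbc ih => exact .head hbc.symm ih
  trans := .trans

theorem reachU_of_edge {i j : Fin d} (h : E i j) : reachU E j i :=
  .single (Or.inl h)

theorem reachU_congr_of_edge (a : Fin d) {i j : Fin d} (h : E i j) :
    reachU E a i ↔ reachU E a j :=
  ⟨fun hai => hai.trans (reachU_equivalence.symm (reachU_of_edge h)),
    fun haj => haj.trans (reachU_of_edge h)⟩

theorem exists_reach_reach_of_existsUnique_isTermSCC {a x z : Fin d}
    (hU : ∃! S : Set (Fin d), IsTermSCC E S ∧ S ⊆ {b | reachU E a b})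
    (hax : reachU E a x) (haz : reachU E a z) :
    ∃ y, reach E x y ∧ reach E z y := by
  obtain ⟨y, hxy, hy⟩ : ∃ y, reach E x y ∧ ∀ b, reach E y b → reach E b y :=
    Relation.ReflTransGen.exists_terminal _ x
  obtain ⟨y', hzy', hy'⟩ : ∃ y', reach E z y' ∧ ∀ b, reach E y' b → reach E b y' :=
    Relation.ReflTransGen.exists_terminal _ z
  have hterm : ∀ {u}, reachU E a u → (∀ b, reach E u b → reach E b u) →
      IsTermSCC E {b | reach E u b ∧ reach E b u} ∧
        {b | reach E u b ∧ reach E b u} ⊆ {b | reachU E a b} :=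
    fun hau hu => ⟨⟨_, rfl, hu⟩, fun b hb => hau.trans (reachU_of_reach hb.1)⟩
  have hSCC := hU.unique (hterm (hax.trans (reachU_of_reach hxy)) hy)
    (hterm (haz.trans (reachU_of_reach hzy')) hy')
  have hyS : y ∈ {b | reach E y' b ∧ reach E b y'} := hSCC ▸ ⟨.refl, .refl⟩
  exact ⟨y, hxy, hzy'.trans hyS.1⟩

theorem Admissible.apply_eq_zero_of_irrefl (hκ : Admissible E κ) (hirr : ∀ i, ¬ E i i)
    (j : Fin d) : κ j j = 0 :=
  (hκ j j).2 (hirr j)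

theorem Admissible.edge_of_ne_zero (hκ : Admissible E κ) {i j : Fin d} (h : κ i j ≠ 0) :
    E i j :=
  not_not.1 fun hE => h ((hκ i j).2 hE)

theorem vecMul_Lap_apply (hd : ∀ j, κ j j = 0) (w : Fin d → ℝ) (j : Fin d) :
    (w ᵥ* Lap κ) j = ∑ i, (w i - w j) * κ i j := by
  have hcol : ∀ i, w i * Lap κ i j = w i * κ i j - if i = j then w j * ∑ ℓ, κ ℓ j else 0 := by
    intro i
    by_cases h : i = j
    · subst h; simp [Lap, hd]
    · simp [Lap, h]
  simp only [vecMul, dotProduct, hcol, Finset.sum_sub_distrib, Finset.sum_ite_eq',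
    Finset.mem_univ, if_true, sub_mul, Finset.mul_sum]

theorem vecMul_Lap_eq_zero_of_forall_ne_zero (hd : ∀ j, κ j j = 0) {w : Fin d → ℝ}
    (hw : ∀ i j, κ i j ≠ 0 → w i = w j) : w ᵥ* Lap κ = 0 := by
  funext j
  rw [vecMul_Lap_apply hd, Pi.zero_apply]
  refine Finset.sum_eq_zero fun i _ => ?_
  by_cases h : κ i j = 0
  · rw [h, mul_zero]
  · rw [hw i j h, sub_self, zero_mul]

theorem indicator_reachU_vecMul_Lap (hκ : Admissible E κ) (hd : ∀ j, κ j j = 0) (a : Fin d) :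
    Set.indicator {b | reachU E a b} (fun _ => (1 : ℝ)) ᵥ* Lap κ = 0 :=
  vecMul_Lap_eq_zero_of_forall_ne_zero hd fun i j h => by
    classical
    simp only [Set.indicator_apply, Set.mem_ofPred_eq,
      reachU_congr_of_edge a (hκ.edge_of_ne_zero h)]

section MaximumPrinciple

variable (hκ : Admissible E κ) (hd : ∀ j, κ j j = 0) {w : Fin d → ℝ} (hw : w ᵥ* Lap κ = 0)
include hκ hd hw

theorem eq_of_edge_of_forall_edge_le {i j : Fin d} (hle : ∀ i, E i j → w i ≤ w j)
    (hij : E i j) : w i = w j := by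
  have hterm : ∀ i ∈ Finset.univ, (w i - w j) * κ i j ≤ 0 := fun i _ => by
    by_cases hE : E i j
    · exact mul_nonpos_of_nonpos_of_nonneg (sub_nonpos.2 (hle i hE)) ((hκ i j).1 hE).le
    · rw [(hκ i j).2 hE, mul_zero]
  have hsum : ∑ i, (w i - w j) * κ i j = 0 := by rw [← vecMul_Lap_apply hd, hw, Pi.zero_apply]
  have := (Finset.sum_eq_zero_iff_of_nonpos hterm).1 hsum i (Finset.mem_univ i)
  rcases mul_eq_zero.1 this with h | h
  · exact sub_eq_zero.1 h
  · exact absurd h ((hκ i j).1 hij).ne'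

theorem eq_of_reach_of_isMaxOn {x : Fin d} (hmax : ∀ i, reachU E x i → w i ≤ w x) {y : Fin d}
    (hxy : reach E x y) : w y = w x := by
  induction hxy with
  | refl => rfl
  | @tail b c hxb hbc ih =>
    refine (eq_of_edge_of_forall_edge_le hκ hd hw (fun i hi => ?_) hbc).trans ih
    exact ih ▸ hmax i ((reachU_of_reach hxb).trans (reachU_of_edge hi))

theorem eq_of_reach_of_isMinOn {x : Fin d} (hmin : ∀ i, reachU E x i → w x ≤ w i) {y : Fin d}
    (hxy : reach E x y) : w y = w x := by
  have hw' : (-w) ᵥ* Lap κ = 0 := by rw [neg_vecMul, hw, neg_zero]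
  simpa using eq_of_reach_of_isMaxOn hκ hd hw' (fun i hi => neg_le_neg (hmin i hi)) hxy

theorem eq_of_reachU_of_existsUnique_isTermSCC
    (hU : ∀ a : Fin d, ∃! S : Set (Fin d), IsTermSCC E S ∧ S ⊆ {b | reachU E a b})
    {a b : Fin d} (hab : reachU E a b) : w a = w b := by
  classical
  set C := Finset.univ.filter (reachU E a)
  have hC : ∀ c, c ∈ C ↔ reachU E a c := by simp [C]
  have haC : a ∈ C := (hC a).2 .refl
  obtain ⟨x, hxC, hxmax⟩ := Finset.exists_max_image C w ⟨a, haC⟩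
  obtain ⟨z, hzC, hzmin⟩ := Finset.exists_min_image C w ⟨a, haC⟩
  have hax := (hC x).1 hxC
  have haz := (hC z).1 hzC
  obtain ⟨y, hxy, hzy⟩ := exists_reach_reach_of_existsUnique_isTermSCC (hU a) hax haz
  have hwx : w y = w x := eq_of_reach_of_isMaxOn hκ hd hw
    (fun i hi => hxmax i ((hC i).2 (hax.trans hi))) hxy
  have hwz : w y = w z := eq_of_reach_of_isMinOn hκ hd hw
    (fun i hi => hzmin i ((hC i).2 (haz.trans hi))) hzy
  have hconst : ∀ c ∈ C, w c = w x := fun c hc => by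
    linarith [hxmax c hc, hzmin c hc]
  rw [hconst a haC, hconst b ((hC b).2 hab)]

end MaximumPrinciple

end Digraph

/-- For each (weakly) connected component of a labelled digraph, the indicator row
vector of its nodes lies in the left kernel of the Laplacian; if moreover each
connected component has exactly one terminal strongly connected component, these
indicator vectors span the left kernel. -/
theorem indicator_components_left_ker_Lap {d : ℕ} (E : Fin d → Fin d → Prop)
    (hirr : ∀ i, ¬ E i i) (κ : Fin d → Fin d → ℝ) (hκ : Admissible E κ) :
    (∀ a : Fin d,
      (Set.indicator {b | reachU E a b} (fun _ => (1 : ℝ))) ᵥ* Lap κ = 0) ∧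
    ((∀ a : Fin d, ∃! S : Set (Fin d), IsTermSCC E S ∧ S ⊆ {b | reachU E a b}) →
      Submodule.span ℝ
          {w : Fin d → ℝ | ∃ a, w = Set.indicator {b | reachU E a b} fun _ => (1 : ℝ)} =
        LinearMap.ker (Matrix.toLin' (Lap κ)ᵀ)) := by
  have hd := hκ.apply_eq_zero_of_irrefl hirr
  have hind := indicator_reachU_vecMul_Lap hκ hd
  refine ⟨hind, fun hU => le_antisymm ?_ fun w hw => ?_⟩
  · rw [Submodule.span_le]
    rintro _ ⟨a, rfl⟩
    exact (mem_ker_toLin'_transpose_iff _ _).2 (hind a)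
  · rw [mem_ker_toLin'_transpose_iff] at hw
    exact Submodule.mem_span_indicator_setOf_of_equivalence reachU_equivalence
      fun a b => eq_of_reachU_of_existsUnique_isTermSCC hκ hd hw hU
end

section
/- Let h(x,κ) = N diag(κ) x^B be the mass-action vector field of a reaction network. A set of indices {i_1,…,i_u} (u < n) is an LTC index set for all κ ∈ ℝ^m_{>0} (i.e., h(x,κ) = 0 for all κ > 0 whenever x_{i_1} = ⋯ = x_{i_u} = 0) if and only if x^{Y*} = 0 whenever x_{i_1} = ⋯ = x_{i_u} = 0, where Y* is the matrix of reactant complexes. -/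
/-!
The vector field is linear in `κ`, with coefficient `N i r * x ^ B_r` at `κ r`. A linear form
vanishing on the open positive orthant vanishes identically, so every coefficient is zero; since
no column of `N` is zero, every reactant monomial vanishes. The converse is immediate.
-/

theorem eq_zero_of_forall_pos_sum_mul_eq_zero {ι K : Type*} [Fintype ι] [DecidableEq ι]
    [Field K] [LinearOrder K] [IsStrictOrderedRing K] (a : ι → K)
    (h : ∀ κ : ι → K, (∀ r, 0 < κ r) → ∑ r, a r * κ r = 0) (r₀ : ι) : a r₀ = 0 := by
  have h₁ : ∑ r, a r = 0 := by simpa using h 1 fun _ => one_pos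
  have h₂ := h (1 + Pi.single r₀ 1) fun r => by
    rcases eq_or_ne r r₀ with rfl | hr <;> simp [*]
  simpa [mul_add, Finset.sum_add_distrib, h₁, Pi.single_apply] using h₂

theorem LTC_iff_reactant_monomials_vanish_general {n m : ℕ}
    (N : Matrix (Fin n) (Fin m) ℝ) (B : Matrix (Fin n) (Fin m) ℕ)
    (hN : ∀ r, ∃ i, N i r ≠ 0)
    (I : Finset (Fin n)) :
    (∀ κ : Fin m → ℝ, (∀ r, 0 < κ r) → ∀ x : Fin n → ℝ, (∀ s, 0 ≤ x s) →
        (∀ k ∈ I, x k = 0) → ∀ i, ∑ r, N i r * κ r * ∏ s, x s ^ B s r = 0) ↔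
    (∀ x : Fin n → ℝ, (∀ s, 0 ≤ x s) → (∀ k ∈ I, x k = 0) →
        ∀ r, ∏ s, x s ^ B s r = 0) := by
  constructor
  · intro h x hx hxI r
    obtain ⟨i, hi⟩ := hN r
    have hcoeff : N i r * ∏ s, x s ^ B s r = 0 :=
      eq_zero_of_forall_pos_sum_mul_eq_zero (fun r => N i r * ∏ s, x s ^ B s r)
        (fun κ hκ => by simpa only [mul_right_comm] using h κ hκ x hx hxI i) r
    exact (mul_eq_zero.mp hcoeff).resolve_left hi
  · intro h κ _ x hx hxI i
    exact Finset.sum_eq_zero fun r _ => by rw [h x hx hxI r, mul_zero]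

/-- Characterization of LTC index sets: for the mass-action vector field
h(x,κ)_i = ∑_r N_{ir} κ_r x^{B_r}, an index set I (with |I| < n) is an LTC index set
for all κ ∈ ℝ^m_{>0} (i.e. h(x,κ) = 0 for all κ > 0 whenever x_i = 0 for i ∈ I)
if and only if all reactant monomials x^{Y*} vanish whenever x_i = 0 for i ∈ I.
The network has no self-edges, so the stoichiometric matrix N has no zero column. -/
theorem LTC_iff_reactant_monomials_vanish {n m : ℕ}
    (N : Matrix (Fin n) (Fin m) ℝ) (B : Matrix (Fin n) (Fin m) ℕ)
    (hN : ∀ r, ∃ i, N i r ≠ 0)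
    (I : Finset (Fin n)) (hI : I.card < n) :
    (∀ κ : Fin m → ℝ, (∀ r, 0 < κ r) → ∀ x : Fin n → ℝ, (∀ s, 0 ≤ x s) →
        (∀ k ∈ I, x k = 0) → ∀ i, ∑ r, N i r * κ r * ∏ s, x s ^ B s r = 0) ↔
    (∀ x : Fin n → ℝ, (∀ s, 0 ≤ x s) → (∀ k ∈ I, x k = 0) →
        ∀ r, ∏ s, x s ^ B s r = 0) :=
  LTC_iff_reactant_monomials_vanish_general N B hN I
end

section
/- A set of species {X_{i_1},…,X_{i_u}} is an LTC species set (for all positive rate constants) if and only if every reactant complex of the network contains at least one of X_{i_1},…,X_{i_u} with positive stoichiometric coefficient. -/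
/-!
If every reactant complex contains a species of `I`, every monomial `x ^ B r` vanishes as soon
as the species of `I` do. Conversely, if the reactant complex of reaction `r` avoids `I`, the
monomial `x ^ B r` equals `1` at the point that is `0` on `I` and `1` elsewhere. The right-hand
side is linear in the rate constants and must vanish for all positive ones, so the coefficient
`N i r * x ^ B r = N i r` of `κ r` vanishes for every `i`: column `r` of `N` is zero.
-/

open Finset

theorem eq_zero_of_forall_pos_sum_mul_eq_zero_s12 {ι R : Type*} [Fintype ι] [Ring R]
    [PartialOrder R] [IsStrictOrderedRing R] {c : ι → R} (h : ∀ κ : ι → R, (∀ r, 0 < κ r) → ∑ r, c r * κ r = 0) : c = 0 := by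
  classical
  funext r
  have h_one : ∑ r, c r = 0 := by simpa using h 1 fun _ => one_pos
  have h_bump := h (1 + Pi.single r 1) fun r' => by
    rcases eq_or_ne r' r with rfl | hr' <;> simp [*, one_add_one_eq_two]
  simpa [mul_add, sum_add_distrib, h_one, Pi.single_apply] using h_bump

theorem prod_pow_eq_zero_of_eq_zero {σ M₀ : Type*} [Fintype σ] [CommMonoidWithZero M₀]
    {x : σ → M₀} {b : σ → ℕ} {k : σ} (hx : x k = 0) (hb : 0 < b k) :
    ∏ s, x s ^ b s = 0 :=
  prod_eq_zero (mem_univ k) (by rw [hx, zero_pow hb.ne'])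

theorem prod_pow_ite_mem_eq_one {σ M₀ : Type*} [Fintype σ] [DecidableEq σ]
    [CommMonoidWithZero M₀]
    {I : Finset σ} {b : σ → ℕ} (hb : ∀ k ∈ I, b k = 0) :
    ∏ s, (if s ∈ I then (0 : M₀) else 1) ^ b s = 1 :=
  prod_eq_one fun s _ => by split_ifs with hs <;> simp [hb s, hs]

open Matrix

theorem LTC_species_iff_every_reactant_contains_general {n m : ℕ}
    (N : Matrix (Fin n) (Fin m) ℝ) (B : Matrix (Fin n) (Fin m) ℕ)
    (hN : ∀ r, ∃ i, N i r ≠ 0)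
    (I : Finset (Fin n)) :
    (∀ κ : Fin m → ℝ, (∀ r, 0 < κ r) → ∀ x : Fin n → ℝ, (∀ s, 0 ≤ x s) →
        (∀ k ∈ I, x k = 0) → ∀ i, ∑ r, N i r * κ r * ∏ s, x s ^ B s r = 0) ↔
    (∀ r, ∃ k ∈ I, 0 < B k r) := by
  constructor
  · intro h r
    by_contra! hr
    set x : Fin n → ℝ := fun s => if s ∈ I then 0 else 1
    have hx_nonneg : ∀ s, 0 ≤ x s := fun s => by by_cases hs : s ∈ I <;> simp [x, hs]
    have hx_I : ∀ k ∈ I, x k = 0 := fun k hk => by simp [x, hk]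
    obtain ⟨i, hi⟩ := hN r
    have h_coeff := congrFun (eq_zero_of_forall_pos_sum_mul_eq_zero_s12
      (c := fun r => N i r * ∏ s, x s ^ B s r) fun κ hκ => by
        simpa only [mul_right_comm] using h κ hκ x hx_nonneg hx_I i) r
    have h_monomial : ∏ s, x s ^ B s r = 1 :=
      prod_pow_ite_mem_eq_one (M₀ := ℝ) fun k hk => Nat.le_zero.mp (hr k hk)
    simp [h_monomial, hi] at h_coeff
  · intro h κ _ x _ hx i
    refine sum_eq_zero fun r _ => ?_
    obtain ⟨k, hk, hB⟩ := h r
    rw [prod_pow_eq_zero_of_eq_zero (hx k hk) hB, mul_zero]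

/-- A set of species I is an LTC species set (for all positive rate constants) if and
only if every reactant complex of the network contains at least one of the species in
I with positive stoichiometric coefficient. The network has no self-edges, so the
stoichiometric matrix N has no zero column. -/
theorem LTC_species_iff_every_reactant_contains {n m : ℕ}
    (N : Matrix (Fin n) (Fin m) ℝ) (B : Matrix (Fin n) (Fin m) ℕ)
    (hN : ∀ r, ∃ i, N i r ≠ 0)
    (I : Finset (Fin n)) (hI : I.card < n) :
    (∀ κ : Fin m → ℝ, (∀ r, 0 < κ r) → ∀ x : Fin n → ℝ, (∀ s, 0 ≤ x s) →
        (∀ k ∈ I, x k = 0) → ∀ i, ∑ r, N i r * κ r * ∏ s, x s ^ B s r = 0) ↔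
    (∀ r, ∃ k ∈ I, 0 < B k r) :=
  LTC_species_iff_every_reactant_contains_general N B hN I
end

section
/- Let G be a reaction network such that every connected component has exactly one terminal strongly connected component, and let φ(x) = ∑_{i=1}^n α_i x_i be a non-zero linear first integral with non-negative integer coefficients of the system ẋ = Y A(κ) x^Y for all κ > 0. Then the row vector α·Y lies in the left kernel of A(κ), and hence α·Y = ∑_{i=1}^r ℓ_i e^{(i)} where e^{(i)} is the indicator vector of the nodes of the i-th connected component and ℓ_i ∈ ℕ_0. -/
open Matrix

/-- Uniqueness of bounded base-`B` digit expansions. -/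
lemma digits_unique : ∀ (m : ℕ) {B : ℕ} (f g : Fin m → ℕ), (∀ s, f s < B) → (∀ s, g s < B) →
    (∑ s, f s * B ^ (s : ℕ)) = (∑ s, g s * B ^ (s : ℕ)) → f = g := by
  intro m
  induction m with
  | zero => intro B f g _ _ _; funext s; exact s.elim0
  | succ m ih =>
    intro B f g hf hg hsum
    have hB : 0 < B := Nat.pos_of_ne_zero (by rintro rfl; exact Nat.not_lt_zero _ (hf 0))
    have expand : ∀ (h : Fin (m+1) → ℕ),
        (∑ s, h s * B ^ (s : ℕ)) = h 0 + B * ∑ s : Fin m, h s.succ * B ^ (s : ℕ) := by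
      intro h
      rw [Fin.sum_univ_succ, Finset.mul_sum]
      simp [pow_succ, Fin.val_succ, pow_succ']
      ring_nf
      apply Finset.sum_congr rfl
      intro s _
      ring
    rw [expand f, expand g] at hsum
    have h0 : f 0 = g 0 := by
      have h1 := congrArg (· % B) hsum
      simpa [Nat.add_mul_mod_self_left, Nat.mod_eq_of_lt (hf 0), Nat.mod_eq_of_lt (hg 0)] using h1
    have h2 : (∑ s : Fin m, f s.succ * B ^ (s : ℕ)) = ∑ s : Fin m, g s.succ * B ^ (s : ℕ) := by
      rw [h0] at hsum
      exact Nat.eq_of_mul_eq_mul_left hB (Nat.add_left_cancel hsum)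
    have h3 := ih (fun s => f s.succ) (fun s => g s.succ) (fun s => hf _) (fun s => hg _) h2
    funext s
    cases s using Fin.cases with
    | zero => exact h0
    | succ s => exact congrFun h3 s

open Polynomial in
/-- Monomials with distinct exponents whose combination vanishes on `[0,∞)` have
zero coefficients. -/
lemma mono_indep {d : ℕ} (c : Fin d → ℝ) (e : Fin d → ℕ) (he : Function.Injective e)
    (h : ∀ t : ℝ, 0 ≤ t → ∑ j, c j * t ^ e j = 0) : c = 0 := by
  classical
  set p : Polynomial ℝ := ∑ j, C (c j) * X ^ e j with hp
  have hroots : ∀ t ∈ Set.Ici (0:ℝ), p.IsRoot t := by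
    intro t ht
    simp only [hp, IsRoot, eval_finset_sum, eval_mul, eval_C, eval_pow, eval_X]
    exact h t ht
  have hp0 : p = 0 := by
    apply Polynomial.eq_zero_of_infinite_isRoot
    exact Set.Infinite.mono hroots (Set.Ici_infinite 0)
  funext j
  have := congrArg (fun q => Polynomial.coeff q (e j)) hp0
  simp only [hp, Polynomial.finset_sum_coeff, Polynomial.coeff_C_mul, Polynomial.coeff_X_pow,
    Polynomial.coeff_zero, mul_ite, mul_one, mul_zero] at this
  have hstep : ∀ j' : Fin d, (if e j = e j' then c j' else 0) = (if j' = j then c j' else 0) := by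
    intro j'
    by_cases hjj : j' = j
    · subst hjj; simp
    · rw [if_neg (fun h => hjj (he h.symm)), if_neg hjj]
  rw [Finset.sum_congr rfl (fun j' _ => hstep j'), Finset.sum_ite_eq' Finset.univ j c] at this
  simpa using this

lemma rearrange {n d : ℕ} (Y : Matrix (Fin n) (Fin d) ℕ) (α : Fin n → ℕ)
    (κ : Fin d → Fin d → ℝ) (x : Fin n → ℝ) :
    ∑ j, ((fun j => ∑ i, (α i : ℝ) * (Y i j : ℝ)) ᵥ* Lap κ) j * (∏ s, x s ^ Y s j)
      = ∑ i, (α i : ℝ) *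
          (((Y.map fun a => (a : ℝ)) * Lap κ) *ᵥ fun j => ∏ s, x s ^ Y s j) i := by
  simp only [vecMul, mulVec, dotProduct, Matrix.mul_apply, Matrix.map_apply,
    Finset.sum_mul, Finset.mul_sum]
  rw [Finset.sum_congr rfl (fun k _ => Finset.sum_comm ..)]
  rw [Finset.sum_comm]
  apply Finset.sum_congr rfl
  intro i _
  apply Finset.sum_congr rfl
  intro j _
  apply Finset.sum_congr rfl
  intro k _
  ring

/-- If every connected component of the reaction network has exactly one terminal
strongly connected component and φ(x) = ∑ α_i x_i (α ∈ ℕ^n, α ≠ 0) is a linear first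
integral of ẋ = Y A(κ) x^Y for all positive κ, then α·Y lies in the left kernel of
A(κ) and α·Y = ∑_i ℓ_i e^{(i)} where e^{(i)} is the indicator vector of the nodes of
the i-th connected component and ℓ_i ∈ ℕ. -/
theorem first_integral_left_ker_decomposition {n d : ℕ}
    (Y : Matrix (Fin n) (Fin d) ℕ)
    (hdist : Function.Injective fun j i => Y i j)
    (E : Fin d → Fin d → Prop) (hirr : ∀ i, ¬ E i i)
    (hone : ∀ a : Fin d, ∃! S : Set (Fin d), IsTermSCC E S ∧ S ⊆ {b | reachU E a b})
    (α : Fin n → ℕ) (hα : α ≠ 0)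
    (hfi : ∀ κ : Fin d → Fin d → ℝ, Admissible E κ →
      ∀ x : Fin n → ℝ, (∀ s, 0 ≤ x s) →
        ∑ i, (α i : ℝ) *
          (((Y.map fun a => (a : ℝ)) * Lap κ) *ᵥ fun j => ∏ s, x s ^ Y s j) i = 0) :
    (∀ κ : Fin d → Fin d → ℝ, Admissible E κ →
        (fun j => ∑ i, (α i : ℝ) * (Y i j : ℝ)) ᵥ* Lap κ = 0) ∧
    ∃ ℓ : Fin d → ℕ, (∀ a b, reachU E a b → ℓ a = ℓ b) ∧
      ∀ j, ∑ i, α i * Y i j = ℓ j := by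
  classical
  -- Part 1: α·Y is in the left kernel of A(κ) for every admissible κ.
  have part1 : ∀ κ : Fin d → Fin d → ℝ, Admissible E κ →
      (fun j => ∑ i, (α i : ℝ) * (Y i j : ℝ)) ᵥ* Lap κ = 0 := by
    intro κ hκ
    set c := (fun j => ∑ i, (α i : ℝ) * (Y i j : ℝ)) ᵥ* Lap κ with hc
    set B := (Finset.univ.sup fun p : Fin n × Fin d => Y p.1 p.2) + 1 with hB
    have hYB : ∀ s j, Y s j < B :=
      fun s j => Nat.lt_succ_of_le (Finset.le_sup (f := fun p : Fin n × Fin d => Y p.1 p.2) (Finset.mem_univ (s, j)))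
    set e : Fin d → ℕ := fun j => ∑ s, Y s j * B ^ (s : ℕ) with he
    have heinj : Function.Injective e := by
      intro j j' hjj
      exact hdist (digits_unique n _ _ (fun s => hYB s j) (fun s => hYB s j') hjj)
    have hzero : ∀ t : ℝ, 0 ≤ t → ∑ j, c j * t ^ e j = 0 := by
      intro t ht
      have hx : ∀ s : Fin n, (0:ℝ) ≤ t ^ (B ^ (s : ℕ)) := fun s => pow_nonneg ht _
      have h1 := hfi κ hκ (fun s => t ^ (B ^ (s : ℕ))) hx
      have h2 : ∀ j, (∏ s : Fin n, (t ^ (B ^ (s : ℕ))) ^ Y s j) = t ^ e j := by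
        intro j
        simp only [← pow_mul]
        rw [Finset.prod_pow_eq_pow_sum]
        congr 1
        rw [he]
        apply Finset.sum_congr rfl
        intro s _
        ring
      calc ∑ j, c j * t ^ e j
          = ∑ j, c j * ∏ s : Fin n, (t ^ (B ^ (s : ℕ))) ^ Y s j :=
            Finset.sum_congr rfl (fun j _ => by rw [h2 j])
        _ = 0 := by rw [hc, rearrange Y α κ (fun s => t ^ (B ^ (s : ℕ)))]; exact h1
    exact mono_indep c e heinj hzero
  refine ⟨part1, fun j => ∑ i, α i * Y i j, ?_, fun j => rfl⟩
  -- Part 2: α·Y is constant along edges, hence on connected components.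
  have hedge : ∀ k0 j0, E k0 j0 → (∑ i, α i * Y i j0) = ∑ i, α i * Y i k0 := by
    intro k0 j0 hE
    have hne : k0 ≠ j0 := fun h => hirr j0 (h ▸ hE)
    set κ1 : Fin d → Fin d → ℝ := fun k j => if E k j then 1 else 0 with hκ1
    set κ2 : Fin d → Fin d → ℝ := fun k j => κ1 k j + if k = k0 ∧ j = j0 then 1 else 0 with hκ2
    have adm1 : Admissible E κ1 := by
      intro i j
      constructor
      · intro h; simp [hκ1, if_pos h]
      · intro h; simp [hκ1, if_neg h]
    have adm2 : Admissible E κ2 := by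
      intro i j
      constructor
      · intro h
        have h1 : (0:ℝ) < κ1 i j := (adm1 i j).1 h
        have h2 : (0:ℝ) ≤ if i = k0 ∧ j = j0 then 1 else 0 := by positivity
        simp only [hκ2]; linarith
      · intro h
        have h1 : κ1 i j = 0 := (adm1 i j).2 h
        have h2 : ¬ (i = k0 ∧ j = j0) := by rintro ⟨rfl, rfl⟩; exact h hE
        simp [hκ2, h1, h2]
    set βr : Fin d → ℝ := fun k => ∑ i, (α i : ℝ) * (Y i k : ℝ) with hβr
    have h1 : ∑ k, βr k * Lap κ1 k j0 = 0 := by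
      have := congrFun (part1 κ1 adm1) j0
      simpa [vecMul, dotProduct, hβr] using this
    have h2 : ∑ k, βr k * Lap κ2 k j0 = 0 := by
      have := congrFun (part1 κ2 adm2) j0
      simpa [vecMul, dotProduct, hβr] using this
    have hdiff : ∀ k, Lap κ2 k j0 - Lap κ1 k j0
        = (if k = k0 then (1:ℝ) else 0) - (if k = j0 then (1:ℝ) else 0) := by
      intro k
      by_cases hk : k = j0
      · subst hk
        simp only [Lap, if_pos rfl]
        have hcol : ∀ ℓ : Fin d, κ2 ℓ k = κ1 ℓ k + (if ℓ = k0 then (1:ℝ) else 0) := by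
          intro ℓ
          simp [hκ2]
        rw [Finset.sum_congr rfl (fun ℓ _ => hcol ℓ), Finset.sum_add_distrib,
          Finset.sum_ite_eq' Finset.univ k0 (fun _ => (1:ℝ))]
        rw [if_neg (Ne.symm hne)]
        simp
      · simp only [Lap, if_neg hk]
        by_cases hk0 : k = k0
        · simp [hκ2, hk0, hk]
        · simp [hκ2, hk0, hk]
    have key : βr k0 - βr j0 = 0 := by
      have hsub : ∑ k, (βr k * Lap κ2 k j0 - βr k * Lap κ1 k j0) = 0 := by
        rw [Finset.sum_sub_distrib, h1, h2]; ring
      have hsub2 : ∑ k, (βr k * ((if k = k0 then (1:ℝ) else 0) - (if k = j0 then (1:ℝ) else 0)))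
          = 0 := by
        have heq : (∑ k, (βr k * ((if k = k0 then (1:ℝ) else 0) - (if k = j0 then (1:ℝ) else 0))))
            = ∑ k, (βr k * Lap κ2 k j0 - βr k * Lap κ1 k j0) :=
          Finset.sum_congr rfl (fun k _ => by rw [← mul_sub, hdiff k])
        rw [heq, hsub]
      simp only [mul_sub, mul_ite, mul_one, mul_zero, Finset.sum_sub_distrib,
        Finset.sum_ite_eq' Finset.univ, Finset.mem_univ, if_true] at hsub2
      linarith [hsub2]
    have keyr : βr j0 = βr k0 := by linarith [key]
    have : ((∑ i, α i * Y i j0 : ℕ) : ℝ) = ((∑ i, α i * Y i k0 : ℕ) : ℝ) := by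
      push_cast
      simpa [hβr] using keyr
    exact_mod_cast this
  intro a b h
  induction h with
  | refl => rfl
  | tail _ hbc ih =>
    rename_i b' c' _
    cases hbc with
    | inl h' => rw [ih]; exact hedge c' b' h'
    | inr h' => rw [ih]; exact (hedge b' c' h').symm
end

section
/- Under the hypotheses of the previous statement, if additionally all the coefficients ℓ_i in the decomposition α·Y = ∑_{i=1}^r ℓ_i e^{(i)} are strictly positive, then the support of the linear first integral φ = ∑ α_i x_i is an LTC index set, provided its cardinality is less than n. -/
open Matrix

/-- Under the hypotheses of the previous statement, if in the decomposition
α·Y = ∑ ℓ_i e^{(i)} all the coefficients ℓ_i are strictly positive and the support of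
φ = ∑ α_i x_i has fewer than n elements, then the support of φ is an LTC index set:
the right-hand side Y A(κ) x^Y vanishes, for all positive κ, whenever x_i = 0 for all
i in the support of α. -/
theorem first_integral_support_is_LTC {n d : ℕ}
    (Y : Matrix (Fin n) (Fin d) ℕ)
    (hdist : Function.Injective fun j i => Y i j)
    (E : Fin d → Fin d → Prop) (hirr : ∀ i, ¬ E i i)
    (hone : ∀ a : Fin d, ∃! S : Set (Fin d), IsTermSCC E S ∧ S ⊆ {b | reachU E a b})
    (α : Fin n → ℕ) (hα : α ≠ 0)
    (hfi : ∀ κ : Fin d → Fin d → ℝ, Admissible E κ →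
      ∀ x : Fin n → ℝ, (∀ s, 0 ≤ x s) →
        ∑ i, (α i : ℝ) *
          (((Y.map fun a => (a : ℝ)) * Lap κ) *ᵥ fun j => ∏ s, x s ^ Y s j) i = 0)
    (hℓ : ∃ ℓ : Fin d → ℕ, (∀ a b, reachU E a b → ℓ a = ℓ b) ∧
      (∀ j, ∑ i, α i * Y i j = ℓ j) ∧ ∀ j, 0 < ℓ j)
    (hsupp : (Finset.univ.filter fun i => α i ≠ 0).card < n) :
    ∀ κ : Fin d → Fin d → ℝ, Admissible E κ →
      ∀ x : Fin n → ℝ, (∀ s, 0 ≤ x s) → (∀ i, α i ≠ 0 → x i = 0) →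
        ((Y.map fun a => (a : ℝ)) * Lap κ) *ᵥ (fun j => ∏ s, x s ^ Y s j) = 0 := by
  intro κ hκ x hx hx0
  have hv : (fun j => ∏ s, x s ^ Y s j) = (0 : Fin d → ℝ) := by
    funext j
    obtain ⟨ℓ, -, hsum, hpos⟩ := hℓ
    have hne : (∑ i, α i * Y i j) ≠ 0 := by
      rw [hsum j]; exact (hpos j).ne'
    obtain ⟨i, -, hi⟩ := Finset.exists_ne_zero_of_sum_ne_zero hne
    have hαi : α i ≠ 0 := fun h => hi (by simp [h])
    have hYi : Y i j ≠ 0 := fun h => hi (by simp [h])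
    exact Finset.prod_eq_zero (Finset.mem_univ i)
      (by rw [hx0 i hαi]; exact zero_pow hYi)
  rw [hv, Matrix.mulVec_zero]
end

section
/- Let G be a first order mass-action network containing the zero complex 0, i.e., ẋ = Ã(κ)x + β where Ã(κ) is obtained from the Laplacian A(κ) of the complex graph by deleting the row and column of the zero complex and β is the deleted column (restricted to the other complexes). If the zero complex does not belong to a terminal strongly connected component of the graph, then the system Ã(κ)x + β = 0 has no solution x ∈ ℝ^n_{≥0}. -/
open Matrix

/-- For a first order mass-action network containing the zero complex (taken as the
last node of the complex graph), write ẋ = Ã(κ)x + β where Ã(κ) is the Laplacian with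
the row and column of the zero complex deleted and β is the deleted column. If the
zero complex does not belong to a terminal strongly connected component, then
Ã(κ)x + β = 0 has no solution x ∈ ℝ^n_{≥0}. -/
theorem no_nonneg_equilibrium_of_zero_not_terminal {n : ℕ}
    (E : Fin (n + 1) → Fin (n + 1) → Prop) (hirr : ∀ i, ¬ E i i)
    (κ : Fin (n + 1) → Fin (n + 1) → ℝ) (hκ : Admissible E κ)
    (hz : ¬ ∀ b, reach E (Fin.last n) b → reach E b (Fin.last n)) :
    ¬ ∃ x : Fin n → ℝ, (∀ i, 0 ≤ x i) ∧
      ((Lap κ).submatrix Fin.castSucc Fin.castSucc) *ᵥ x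
        + (fun i : Fin n => Lap κ i.castSucc (Fin.last n)) = 0 := by
  classical
  rintro ⟨x, hx, heq⟩
  set z := Fin.last n with hzdef
  set v : Fin (n + 1) → ℝ := Fin.snoc x 1 with hvdef
  have hκ0 : ∀ i j, 0 ≤ κ i j := fun i j => by
    by_cases h : E i j
    · exact ((hκ i j).1 h).le
    · exact le_of_eq ((hκ i j).2 h).symm
  have hdiag : ∀ j, κ j j = 0 := fun j => (hκ j j).2 (hirr j)
  have hv0 : ∀ j, 0 ≤ v j := by
    intro j
    refine Fin.lastCases ?_ ?_ j
    · simp [hvdef]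
    · intro i; simpa [hvdef] using hx i
  have hvz : v z = 1 := by simp [hvdef, hzdef]
  -- the first n rows of `Lap κ *ᵥ v` vanish
  have hrow : ∀ i : Fin n, (Lap κ *ᵥ v) i.castSucc = 0 := by
    intro i
    have h := congrFun heq i
    simp only [Pi.add_apply, Pi.zero_apply, mulVec, dotProduct, submatrix_apply] at h
    show ∑ j, Lap κ i.castSucc j * v j = 0
    rw [Fin.sum_univ_castSucc]
    simpa [hvdef] using h
  -- each column of the Laplacian sums to zero
  have hLap : ∀ i j, Lap κ i j = κ i j + (if i = j then -(∑ ℓ, κ ℓ j) else 0) := by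
    intro i j
    unfold Lap
    by_cases h : i = j
    · subst h; simp [hdiag]
    · simp [h]
  have hcol : ∀ j, ∑ i, Lap κ i j = 0 := by
    intro j
    simp only [hLap]
    rw [Finset.sum_add_distrib, Finset.sum_ite_eq' Finset.univ j]
    simp
  -- the last row also vanishes, so v is in the kernel
  have htot : ∑ i, (Lap κ *ᵥ v) i = 0 := by
    simp only [mulVec, dotProduct]
    rw [Finset.sum_comm]
    have : ∀ j : Fin (n + 1), ∑ i, Lap κ i j * v j = 0 := by
      intro j; rw [← Finset.sum_mul, hcol, zero_mul]
    simp [this]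
  have hlast : (Lap κ *ᵥ v) z = 0 := by
    have := htot
    rw [Fin.sum_univ_castSucc] at this
    simp only [hrow, Finset.sum_const_zero, zero_add] at this
    exact this
  have hker : Lap κ *ᵥ v = 0 := by
    funext j
    refine Fin.lastCases ?_ ?_ j
    · exact hlast
    · exact fun i => hrow i
  -- key summation identity over any set S
  have hkey : ∀ S : Finset (Fin (n + 1)),
      ∑ j ∈ S, v j * (∑ i ∈ Sᶜ, κ i j) = ∑ j ∈ Sᶜ, v j * (∑ i ∈ S, κ i j) := by
    intro S
    have h0 : ∑ i ∈ S, (Lap κ *ᵥ v) i = 0 := by rw [hker]; simp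
    have h1 : ∑ j : Fin (n + 1), (∑ i ∈ S, Lap κ i j) * v j = 0 := by
      rw [← h0]
      simp only [mulVec, dotProduct]
      rw [Finset.sum_comm]
      simp [Finset.sum_mul]
    have h2 : ∀ j, ∑ i ∈ S, Lap κ i j =
        (if j ∈ S then -(∑ i ∈ Sᶜ, κ i j) else ∑ i ∈ S, κ i j) := by
      intro j
      simp only [hLap]
      rw [Finset.sum_add_distrib, Finset.sum_ite_eq' S j]
      by_cases hj : j ∈ S
      · simp only [hj, if_true]
        have h := Finset.sum_add_sum_compl S (fun i => κ i j)
        linarith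
      · simp [hj]
    have h3 : ∑ j ∈ S, (-(∑ i ∈ Sᶜ, κ i j)) * v j
        + ∑ j ∈ Sᶜ, (∑ i ∈ S, κ i j) * v j = 0 := by
      rw [← h1, ← Finset.sum_add_sum_compl S (fun j => (∑ i ∈ S, Lap κ i j) * v j)]
      congr 1
      · exact Finset.sum_congr rfl fun j hj => by rw [h2 j, if_pos hj]
      · exact Finset.sum_congr rfl fun j hj => by
          rw [h2 j, if_neg (Finset.mem_compl.mp hj)]
    have e1 : ∑ j ∈ S, (-(∑ i ∈ Sᶜ, κ i j)) * v j
        = -(∑ j ∈ S, v j * (∑ i ∈ Sᶜ, κ i j)) := by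
      rw [← Finset.sum_neg_distrib]
      exact Finset.sum_congr rfl fun j _ => by ring
    have e2 : ∑ j ∈ Sᶜ, (∑ i ∈ S, κ i j) * v j
        = ∑ j ∈ Sᶜ, v j * (∑ i ∈ S, κ i j) :=
      Finset.sum_congr rfl fun j _ => mul_comm _ _
    rw [e1, e2] at h3
    linarith
  -- P : the positive support of v, closed under outgoing edges
  set P : Finset (Fin (n + 1)) := Finset.univ.filter (fun j => 0 < v j) with hPdef
  have hzP : z ∈ P := by simp [hPdef, hvz]
  have hPclosed : ∀ j ∈ P, ∀ i, E i j → i ∈ P := by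
    have hRHS : ∑ j ∈ Pᶜ, v j * (∑ i ∈ P, κ i j) = 0 := by
      refine Finset.sum_eq_zero fun j hj => ?_
      have : ¬ (0 < v j) := by simpa [hPdef] using Finset.mem_compl.mp hj
      have : v j = 0 := le_antisymm (not_lt.mp this) (hv0 j)
      rw [this, zero_mul]
    have hLHS : ∑ j ∈ P, v j * (∑ i ∈ Pᶜ, κ i j) = 0 := by rw [hkey P, hRHS]
    have hterm : ∀ j ∈ P, v j * (∑ i ∈ Pᶜ, κ i j) = 0 := by
      rw [Finset.sum_eq_zero_iff_of_nonneg] at hLHS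
      · exact hLHS
      · intro j hj
        exact mul_nonneg (hv0 j) (Finset.sum_nonneg fun i _ => hκ0 i j)
    intro j hj i hE
    by_contra hiP
    have hvj : 0 < v j := by simpa [hPdef] using hj
    have hsum : ∑ i ∈ Pᶜ, κ i j = 0 := by
      have := hterm j hj
      rcases mul_eq_zero.mp this with h | h
      · exact absurd h (ne_of_gt hvj)
      · exact h
    have hle : κ i j ≤ ∑ i' ∈ Pᶜ, κ i' j :=
      Finset.single_le_sum (fun i' _ => hκ0 i' j) (Finset.mem_compl.mpr hiP)
    have := (hκ i j).1 hE
    linarith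
  have hPreach : ∀ b, reach E z b → b ∈ P := by
    intro b hb
    induction hb with
    | refl => exact hzP
    | tail _ h2 ih => exact hPclosed _ ih _ h2
  -- the terminal obstruction
  push_neg at hz
  obtain ⟨b, hzb, hbz⟩ := hz
  set R : Finset (Fin (n + 1)) := Finset.univ.filter (fun j => reach E b j) with hRdef
  have hbR : b ∈ R := by simp [hRdef]; exact Relation.ReflTransGen.refl
  have hzR : z ∉ R := by
    intro h
    exact hbz (by simpa [hRdef] using h)
  have hRclosed : ∀ j ∈ R, ∀ i, E i j → i ∈ R := by
    intro j hj i hE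
    have hj' : reach E b j := by simpa [hRdef] using hj
    simp only [hRdef, Finset.mem_filter, Finset.mem_univ, true_and]
    exact hj'.tail hE
  have hRLHS : ∑ j ∈ R, v j * (∑ i ∈ Rᶜ, κ i j) = 0 := by
    refine Finset.sum_eq_zero fun j hj => ?_
    have hsum : ∑ i ∈ Rᶜ, κ i j = 0 := by
      refine Finset.sum_eq_zero fun i hi => ?_
      by_contra hne
      have hE : E i j := by
        by_contra hnE
        exact hne ((hκ i j).2 hnE)
      exact (Finset.mem_compl.mp hi) (hRclosed j hj i hE)
    rw [hsum, mul_zero]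
  have hRterm : ∀ j ∈ Rᶜ, v j * (∑ i ∈ R, κ i j) = 0 := by
    have hRHS : ∑ j ∈ Rᶜ, v j * (∑ i ∈ R, κ i j) = 0 := by rw [← hkey R, hRLHS]
    rw [Finset.sum_eq_zero_iff_of_nonneg] at hRHS
    · exact hRHS
    · intro j hj
      exact mul_nonneg (hv0 j) (Finset.sum_nonneg fun i _ => hκ0 i j)
  -- walk from z to b must cross into R, contradiction
  have cross : ∀ a, reach E a b → a ∈ P → a ∉ R → False := by
    intro a h
    induction h using Relation.ReflTransGen.head_induction_on with
    | refl => exact fun _ haR => haR hbR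
    | head hstep _ ih =>
      rename_i a' c _
      intro haP haR
      have hcP : c ∈ P := hPclosed _ haP _ hstep
      by_cases hcR : c ∈ R
      · -- crossing edge a' → c
        have hva : 0 < v a' := by simpa [hPdef] using haP
        have hterm := hRterm a' (Finset.mem_compl.mpr haR)
        have hsum : ∑ i ∈ R, κ i a' = 0 := by
          rcases mul_eq_zero.mp hterm with h | h
          · exact absurd h (ne_of_gt hva)
          · exact h
        have hle : κ c a' ≤ ∑ i ∈ R, κ i a' :=
          Finset.single_le_sum (fun i _ => hκ0 i a') hcR
        have := (hκ c a').1 hstep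
        linarith
      · exact ih hcP hcR
  exact cross z hzb hzP hzR
end
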